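/- arXiv:1706.07832 — 9 statements merged into one kernel-verified Lean document; each statement's English description precedes it below -/
import Mathlib

section
/- Let n ≥ 2 and let ρ be a real-valued function on n×n real symmetric positive semidefinite matrices that is convex (ρ(αL₁+(1−α)L₂) ≤ αρ(L₁)+(1−α)ρ(L₂) for all 0 ≤ α ≤ 1) and orthogonally invariant (ρ(U L Uᵀ) = ρ(L) for every orthogonal matrix U). Then ρ is a Schur-convex function of the eigenvalues: for any two real symmetric positive semidefinite n×n matrices L₁ and L₂ whose eigenvalue vectors (listed in decreasing order) satisfy that the eigenvalue vector of L₁ majorizes the eigenvalue vector of L₂, one has ρ(L₂) ≤ ρ(L₁). -/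
/-!
Conjugating by an orthogonal eigenbasis and then by a permutation matrix gives
`ρ L = ρ (diagonal λ)` with `λ` the decreasingly ordered eigenvalues, so it suffices to show that
`f v = ρ (diagonal v)`, which is convex and permutation invariant on the nonnegative orthant, is
Schur-convex. If `x ⊵ y` with `y` decreasing and `x ≠ y`, let `k` be the first index with
`x k < y k` and `j < k` an index with `x j > y j`. Moving `δ = min (x j - y j) (y k - x k)` from
coordinate `j` to coordinate `k` keeps `x ⊵ y`, makes one more coordinate agree with `y`, and
lands on the segment between `x` and `x ∘ swap j k`, where `f` is at most `f x`. Induct on the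
number of coordinates where `x` and `y` differ.
-/

open Filter Finset Matrix

/-- The eigenvalues of a real matrix, listed in increasing order (counted with multiplicity);
junk value `0` if the matrix is not symmetric. -/
noncomputable def sortedEigenvalues {n : ℕ} (A : Matrix (Fin n) (Fin n) ℝ) : Fin n → ℝ :=
  if hA : A.IsHermitian then hA.eigenvalues ∘ Tuple.sort hA.eigenvalues else fun _ => 0

/-- Eigenvalues of `A` listed in decreasing order. -/
noncomputable def decEigenvalues {n : ℕ} (A : Matrix (Fin n) (Fin n) ℝ) : Fin n → ℝ :=
  fun i => sortedEigenvalues A i.rev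

/-- `x` majorizes `y`, for vectors already listed in decreasing order. -/
def MajorizesDec {n : ℕ} (x y : Fin n → ℝ) : Prop :=
  (∑ i, x i = ∑ i, y i) ∧
    ∀ k : ℕ, k ≤ n →
      ∑ i ∈ Finset.univ.filter (fun i : Fin n => (i : ℕ) < k), y i ≤
        ∑ i ∈ Finset.univ.filter (fun i : Fin n => (i : ℕ) < k), x i

section Transfer

variable {n : ℕ}

def transfer (x : Fin n → ℝ) (j k : Fin n) (δ : ℝ) : Fin n → ℝ :=
  x - Pi.single j δ + Pi.single k δ

variable {x y : Fin n → ℝ} {j k : Fin n} {δ : ℝ}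

lemma transfer_apply_left (hjk : j ≠ k) : transfer x j k δ j = x j - δ := by
  simp [transfer, hjk]

lemma transfer_apply_right (hjk : j ≠ k) : transfer x j k δ k = x k + δ := by
  simp [transfer, hjk.symm]

lemma transfer_apply_of_ne {i : Fin n} (hij : i ≠ j) (hik : i ≠ k) : transfer x j k δ i = x i := by
  simp [transfer, hij, hik]

lemma sum_transfer (A : Finset (Fin n)) :
    ∑ i ∈ A, transfer x j k δ i =
      ∑ i ∈ A, x i - (if j ∈ A then δ else 0) + (if k ∈ A then δ else 0) := by
  simp only [transfer, Pi.add_apply, Pi.sub_apply, sum_add_distrib, sum_sub_distrib,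
    sum_pi_single']

lemma transfer_mem_segment (hjk : j ≠ k) (hδ : 0 ≤ δ) (hδx : δ ≤ x j - x k) :
    transfer x j k δ ∈ segment ℝ x (x ∘ Equiv.swap j k) := by
  obtain hδ0 | hδpos := hδ.eq_or_lt
  · subst hδ0
    simpa [transfer] using left_mem_segment ℝ x (x ∘ Equiv.swap j k)
  have hgap : 0 < x j - x k := hδpos.trans_le hδx
  refine ⟨1 - δ / (x j - x k), δ / (x j - x k), by rw [sub_nonneg, div_le_one hgap]; exact hδx,
    by positivity, by ring, ?_⟩
  ext i
  simp only [Pi.add_apply, Pi.smul_apply, smul_eq_mul, Function.comp_apply]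
  by_cases hij : i = j
  · subst hij
    rw [Equiv.swap_apply_left, transfer_apply_left hjk]
    field_simp
    ring
  by_cases hik : i = k
  · subst hik
    rw [Equiv.swap_apply_right, transfer_apply_right hjk]
    field_simp
    ring
  · rw [Equiv.swap_apply_of_ne_of_ne hij hik, transfer_apply_of_ne hij hik]
    ring

lemma MajorizesDec.transfer (h : MajorizesDec x y) (hjk : j < k) (hδ : δ ≤ x j - y j)
    (hle : ∀ i < k, y i ≤ x i) : MajorizesDec (transfer x j k δ) y := by
  refine ⟨by simp [sum_transfer, h.1], fun m hm => ?_⟩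
  have hprefix := h.2 m hm
  rw [sum_transfer]
  by_cases hjm : (j : ℕ) < m
  · by_cases hkm : (k : ℕ) < m
    · simp only [mem_filter, mem_univ, true_and, hjm, hkm, if_true]
      linarith
    · have hgain : x j - y j ≤ ∑ i ∈ univ.filter (fun i : Fin n => (i : ℕ) < m), (x i - y i) :=
        single_le_sum (f := fun i => x i - y i)
          (fun i hi => sub_nonneg.2 (hle i (by rw [mem_filter] at hi; omega))) (by simpa using hjm)
      simp only [mem_filter, mem_univ, true_and, hjm, hkm, if_true, if_false,
        sum_sub_distrib] at hgain ⊢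
      linarith
  · have hkm : ¬ (k : ℕ) < m := by omega
    simp only [mem_filter, mem_univ, true_and, hjm, hkm, if_false]
    linarith

lemma MajorizesDec.exists_transfer_indices (h : MajorizesDec x y) (hxy : x ≠ y) :
    ∃ j k, j < k ∧ y j < x j ∧ x k < y k ∧ ∀ i < k, y i ≤ x i := by
  have hbelow : ∃ k, x k < y k := by
    by_contra! hle
    exact hxy (funext fun i =>
      ((sum_eq_sum_iff_of_le fun i _ => hle i).1 h.1.symm i (mem_univ i)).symm)
  obtain ⟨k, hk, hkmin⟩ := wellFounded_lt.has_min {i | x i < y i} hbelow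
  have hle : ∀ i < k, y i ≤ x i := fun i hik => not_lt.1 fun hi => hkmin i hi hik
  obtain ⟨j, hjk, hj⟩ : ∃ j < k, y j < x j := by
    by_contra! hno
    have hprefix := h.2 (k + 1) k.isLt
    refine hprefix.not_gt (sum_lt_sum (fun i hi => ?_) ⟨k, by simp, hk⟩)
    obtain hik | rfl := (Fin.le_def.2 (Nat.lt_succ_iff.1 (by simpa using hi))).lt_or_eq
    · exact hno i hik
    · exact hk.le
  exact ⟨j, k, hjk, hj, hk, hle⟩

lemma card_filter_transfer_ne_lt (hjk : j ≠ k) (hj : x j ≠ y j) (hk : x k ≠ y k)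
    (hfix : transfer x j k δ j = y j ∨ transfer x j k δ k = y k) :
    (univ.filter fun i => transfer x j k δ i ≠ y i).card <
      (univ.filter fun i => x i ≠ y i).card := by
  apply card_lt_card
  rw [ssubset_iff_of_subset]
  · rcases hfix with hfix | hfix
    · exact ⟨j, by simpa using hj, by simpa using hfix⟩
    · exact ⟨k, by simpa using hk, by simpa using hfix⟩
  intro i
  simp only [mem_filter, mem_univ, true_and]
  by_cases hij : i = j
  · subst hij; exact fun _ => hj
  by_cases hik : i = k
  · subst hik; exact fun _ => hk
  · rw [transfer_apply_of_ne hij hik]; exact id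

end Transfer

theorem ConvexOn.le_of_majorizesDec {n : ℕ} {s : Set (Fin n → ℝ)} {f : (Fin n → ℝ) → ℝ}
    (hf : ConvexOn ℝ s f) (hs : ∀ x ∈ s, ∀ σ : Equiv.Perm (Fin n), x ∘ σ ∈ s)
    (hfσ : ∀ x ∈ s, ∀ σ : Equiv.Perm (Fin n), f (x ∘ σ) = f x) {x y : Fin n → ℝ}
    (hx : x ∈ s) (hy : Antitone y) (h : MajorizesDec x y) : f y ≤ f x := by
  induction hc : (univ.filter fun i => x i ≠ y i).card using Nat.strong_induction_on
    generalizing x with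
  | _ c ih =>
  obtain rfl | hxy := eq_or_ne x y
  · rfl
  obtain ⟨j, k, hjk, hj, hk, hle⟩ := h.exists_transfer_indices hxy
  set δ := min (x j - y j) (y k - x k) with hδ_def
  have hδ : 0 ≤ δ := le_min (by linarith) (by linarith)
  have hδx : δ ≤ x j - x k := by
    linarith [hy hjk.le, min_le_left (x j - y j) (y k - x k), min_le_right (x j - y j) (y k - x k)]
  have hseg := transfer_mem_segment hjk.ne hδ hδx
  have hfix : transfer x j k δ j = y j ∨ transfer x j k δ k = y k := by
    rw [transfer_apply_left hjk.ne, transfer_apply_right hjk.ne]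
    rcases min_choice (x j - y j) (y k - x k) with hmin | hmin
    · left; rw [hδ_def, hmin]; ring
    · right; rw [hδ_def, hmin]; ring
  calc f y ≤ f (transfer x j k δ) :=
        ih _ (hc ▸ card_filter_transfer_ne_lt hjk.ne hj.ne' hk.ne hfix)
          (hf.1.segment_subset hx (hs x hx _) hseg) (h.transfer hjk (min_le_left _ _) hle)
          rfl
    _ ≤ max (f x) (f (x ∘ Equiv.swap j k)) := hf.le_on_segment hx (hs x hx _) hseg
    _ = f x := by rw [hfσ x hx, max_self]

section Orthogonal

variable {m R : Type*} [Fintype m] [DecidableEq m]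

lemma permMatrix_mul_transpose_self [NonAssocSemiring R] (σ : Equiv.Perm m) :
    σ.permMatrix R * (σ.permMatrix R)ᵀ = 1 := by
  rw [transpose_permMatrix, ← permMatrix_mul, inv_mul_cancel, permMatrix_one]

lemma transpose_mul_permMatrix_self [NonAssocSemiring R] (σ : Equiv.Perm m) :
    (σ.permMatrix R)ᵀ * σ.permMatrix R = 1 := by
  rw [transpose_permMatrix, ← permMatrix_mul, mul_inv_cancel, permMatrix_one]

lemma permMatrix_mul_diagonal_mul_transpose [NonAssocSemiring R] (σ : Equiv.Perm m) (v : m → R) :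
    σ.permMatrix R * diagonal v * (σ.permMatrix R)ᵀ = diagonal (v ∘ σ) := by
  ext i j
  by_cases hij : i = j <;>
    simp [Equiv.Perm.permMatrix, PEquiv.toMatrix_apply, diagonal_apply, Matrix.mul_apply,
      Equiv.symm_apply_eq, hij]

lemma Matrix.IsHermitian.eq_eigenvectorUnitary_mul_diagonal_mul_transpose {A : Matrix m m ℝ}
    (hA : A.IsHermitian) :
    A = (hA.eigenvectorUnitary : Matrix m m ℝ) * diagonal hA.eigenvalues *
      (hA.eigenvectorUnitary : Matrix m m ℝ)ᵀ := by
  conv_lhs => rw [hA.spectral_theorem]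
  simp [Unitary.conjStarAlgAut_apply, star_eq_conjTranspose]

end Orthogonal

section OrthogonallyInvariant

variable {m : Type*} [DecidableEq m] {ρ : Matrix m m ℝ → ℝ}

lemma convexOn_diagonal
    (hconv : ∀ L₁ L₂ : Matrix m m ℝ, L₁.PosSemidef → L₂.PosSemidef →
      ∀ α : ℝ, 0 ≤ α → α ≤ 1 → ρ (α • L₁ + (1 - α) • L₂) ≤ α * ρ L₁ + (1 - α) * ρ L₂) :
    ConvexOn ℝ (Set.Ici 0) fun v : m → ℝ => ρ (diagonal v) := by
  refine ⟨convex_Ici 0, fun u hu v hv a b ha hb hab => ?_⟩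
  obtain rfl : b = 1 - a := by linarith
  have h := hconv _ _ (posSemidef_diagonal_iff.2 hu) (posSemidef_diagonal_iff.2 hv) a ha
    (by linarith)
  rwa [← diagonal_smul, ← diagonal_smul, diagonal_add] at h

lemma apply_diagonal_comp_perm [Fintype m]
    (hinv : ∀ L : Matrix m m ℝ, L.PosSemidef →
      ∀ U : Matrix m m ℝ, U * Uᵀ = 1 → Uᵀ * U = 1 → ρ (U * L * Uᵀ) = ρ L)
    {v : m → ℝ} (hv : 0 ≤ v) (σ : Equiv.Perm m) : ρ (diagonal (v ∘ σ)) = ρ (diagonal v) := by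
  rw [← permMatrix_mul_diagonal_mul_transpose]
  exact hinv _ (posSemidef_diagonal_iff.2 hv) _ (permMatrix_mul_transpose_self σ)
    (transpose_mul_permMatrix_self σ)

lemma apply_eq_apply_diagonal_eigenvalues [Fintype m]
    (hinv : ∀ L : Matrix m m ℝ, L.PosSemidef →
      ∀ U : Matrix m m ℝ, U * Uᵀ = 1 → Uᵀ * U = 1 → ρ (U * L * Uᵀ) = ρ L)
    {L : Matrix m m ℝ} (hL : L.PosSemidef) : ρ L = ρ (diagonal hL.1.eigenvalues) := by
  have hU := hL.1.eigenvectorUnitary.2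
  conv_lhs => rw [hL.1.eq_eigenvectorUnitary_mul_diagonal_mul_transpose]
  exact hinv _ (posSemidef_diagonal_iff.2 hL.eigenvalues_nonneg) _
    (by simpa [star_eq_conjTranspose] using mem_unitaryGroup_iff.1 hU)
    (by simpa [star_eq_conjTranspose] using mem_unitaryGroup_iff'.1 hU)

end OrthogonallyInvariant

section DecEigenvalues

variable {n : ℕ} {A : Matrix (Fin n) (Fin n) ℝ}

lemma decEigenvalues_eq_comp (hA : A.IsHermitian) :
    decEigenvalues A = hA.eigenvalues ∘ (Fin.revPerm.trans (Tuple.sort hA.eigenvalues)) := by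
  ext i
  simp only [decEigenvalues, sortedEigenvalues, dif_pos hA]
  rfl

lemma decEigenvalues_antitone (hA : A.IsHermitian) : Antitone (decEigenvalues A) :=
  fun _ _ hij => by
    simpa only [decEigenvalues, sortedEigenvalues, dif_pos hA] using
      Tuple.monotone_sort hA.eigenvalues (Fin.rev_le_rev.2 hij)

lemma decEigenvalues_nonneg (hA : A.PosSemidef) : 0 ≤ decEigenvalues A := by
  rw [decEigenvalues_eq_comp hA.1]
  exact fun _ => hA.eigenvalues_nonneg _

lemma apply_eq_apply_diagonal_decEigenvalues {ρ : Matrix (Fin n) (Fin n) ℝ → ℝ}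
    (hinv : ∀ L : Matrix (Fin n) (Fin n) ℝ, L.PosSemidef →
      ∀ U : Matrix (Fin n) (Fin n) ℝ, U * Uᵀ = 1 → Uᵀ * U = 1 → ρ (U * L * Uᵀ) = ρ L)
    (hA : A.PosSemidef) : ρ A = ρ (diagonal (decEigenvalues A)) := by
  rw [apply_eq_apply_diagonal_eigenvalues hinv hA, decEigenvalues_eq_comp hA.1,
    apply_diagonal_comp_perm hinv hA.eigenvalues_nonneg]

end DecEigenvalues

theorem schur_convexity_of_convex_orthInvariant_general {n : ℕ}
    (ρ : Matrix (Fin n) (Fin n) ℝ → ℝ)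
    (hconv : ∀ L₁ L₂ : Matrix (Fin n) (Fin n) ℝ, L₁.PosSemidef → L₂.PosSemidef →
      ∀ α : ℝ, 0 ≤ α → α ≤ 1 →
        ρ (α • L₁ + (1 - α) • L₂) ≤ α * ρ L₁ + (1 - α) * ρ L₂)
    (hinv : ∀ L : Matrix (Fin n) (Fin n) ℝ, L.PosSemidef →
      ∀ U : Matrix (Fin n) (Fin n) ℝ, U * Uᵀ = 1 → Uᵀ * U = 1 →
        ρ (U * L * Uᵀ) = ρ L)
    (L₁ L₂ : Matrix (Fin n) (Fin n) ℝ) (h₁ : L₁.PosSemidef) (h₂ : L₂.PosSemidef)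
    (hmaj : MajorizesDec (decEigenvalues L₁) (decEigenvalues L₂)) :
    ρ L₂ ≤ ρ L₁ := by
  rw [apply_eq_apply_diagonal_decEigenvalues hinv h₁,
    apply_eq_apply_diagonal_decEigenvalues hinv h₂]
  exact (convexOn_diagonal hconv).le_of_majorizesDec
    (fun x hx σ i => hx (σ i)) (fun x hx σ => apply_diagonal_comp_perm hinv hx σ)
    (decEigenvalues_nonneg h₁) (decEigenvalues_antitone h₂.1) hmaj

/-- Every convex, orthogonally invariant function on positive semidefinite matrices is
Schur-convex in the eigenvalues. -/
theorem schur_convexity_of_convex_orthInvariant {n : ℕ} (hn : 2 ≤ n)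
    (ρ : Matrix (Fin n) (Fin n) ℝ → ℝ)
    (hconv : ∀ L₁ L₂ : Matrix (Fin n) (Fin n) ℝ, L₁.PosSemidef → L₂.PosSemidef →
      ∀ α : ℝ, 0 ≤ α → α ≤ 1 →
        ρ (α • L₁ + (1 - α) • L₂) ≤ α * ρ L₁ + (1 - α) * ρ L₂)
    (hinv : ∀ L : Matrix (Fin n) (Fin n) ℝ, L.PosSemidef →
      ∀ U : Matrix (Fin n) (Fin n) ℝ, U * Uᵀ = 1 → Uᵀ * U = 1 →
        ρ (U * L * Uᵀ) = ρ L)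
    (L₁ L₂ : Matrix (Fin n) (Fin n) ℝ) (h₁ : L₁.PosSemidef) (h₂ : L₂.PosSemidef)
    (hmaj : MajorizesDec (decEigenvalues L₁) (decEigenvalues L₂)) :
    ρ L₂ ≤ ρ L₁ :=
  schur_convexity_of_convex_orthInvariant_general ρ hconv hinv L₁ L₂ h₁ h₂ hmaj
end

section
/- Let L be the Laplacian of a connected weighted graph on n nodes with eigenvalues 0 = λ₁ < λ₂ ≤ … ≤ λₙ, let 1 ≤ k ≤ n−2, and let L̂ be an n×n real symmetric positive semidefinite matrix of rank at most k. Let φ : [0,∞) → [0,∞) be a decreasing convex function. Then Σ_{i=2}^{n} φ(λ_i(L + L̂)) ≥ Σ_{i=k+2}^{n} φ(λ_i(L)), where λ_i(L+L̂) denote the eigenvalues of L + L̂ listed in increasing order. -/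
open Filter Finset Matrix

/-- `L` is the Laplacian matrix of a connected weighted graph: symmetric positive semidefinite,
`L 𝟙 = 0`, and the kernel of `L` is exactly the span of the all-ones vector. -/
def IsConnLaplacian {n : ℕ} (L : Matrix (Fin n) (Fin n) ℝ) : Prop :=
  L.PosSemidef ∧ (L *ᵥ (fun _ => (1 : ℝ)) = 0) ∧
    ∀ v : Fin n → ℝ, L *ᵥ v = 0 → ∃ c : ℝ, v = fun _ => c

/-!
Weyl's inequality for a perturbation of rank at most `k`: `λᵢ(L + L̂) ≤ λᵢ₊ₖ(L)`. By a dimension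
count there is a nonzero vector `x` in `ker L̂`, in the span of the first `i + k + 1` eigenvectors of
`L`, and in the span of the eigenvectors of `L + L̂` from the `i`-th on; its Rayleigh quotient
`⟪x, (L + L̂) x⟫ = ⟪x, L x⟫` lies between `λᵢ(L + L̂)` and `λᵢ₊ₖ(L)`. As `φ` is antitone this gives
`φ(λᵢ₊ₖ(L)) ≤ φ(λᵢ(L + L̂))`, and the `k` terms of the right-hand side left unmatched are
nonnegative.
-/

theorem Finset.sum_le_sum_of_injOn {ι κ M : Type*} [AddCommMonoid M] [PartialOrder M]
    [IsOrderedAddMonoid M] [DecidableEq κ] {s : Finset ι} {t : Finset κ} {f : ι → M}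
    {g : κ → M} (e : ι → κ) (he : Set.InjOn e s) (hst : Set.MapsTo e s t)
    (hfg : ∀ i ∈ s, f i ≤ g (e i)) (hg : ∀ j ∈ t, j ∉ s.image e → 0 ≤ g j) :
    ∑ i ∈ s, f i ≤ ∑ j ∈ t, g j :=
  calc ∑ i ∈ s, f i ≤ ∑ i ∈ s, g (e i) := Finset.sum_le_sum hfg
    _ = ∑ j ∈ s.image e, g j := (Finset.sum_image he).symm
    _ ≤ ∑ j ∈ t, g j :=
      Finset.sum_le_sum_of_subset_of_nonneg (Finset.image_subset_iff.2 hst) hg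

theorem Submodule.exists_mem_inf_ne_zero_of_finrank_lt {K V : Type*} [DivisionRing K]
    [AddCommGroup V] [Module K V] [FiniteDimensional K V] {s t : Submodule K V}
    (h : Module.finrank K V < Module.finrank K s + Module.finrank K t) :
    ∃ x ∈ s ⊓ t, x ≠ 0 := by
  by_contra! hst
  have hdisj : Disjoint s t := disjoint_iff.2 ((Submodule.eq_bot_iff _).2 hst)
  exact (Submodule.finrank_add_finrank_le_of_disjoint hdisj).not_gt h

theorem Submodule.finrank_sub_finrank_range_le_finrank_inf_ker {K V V' : Type*} [DivisionRing K]
    [AddCommGroup V] [Module K V] [FiniteDimensional K V] [AddCommGroup V'] [Module K V']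
    (s : Submodule K V) (f : V →ₗ[K] V') :
    Module.finrank K s - Module.finrank K (LinearMap.range f) ≤
      Module.finrank K ↥(s ⊓ LinearMap.ker f) := by
  have hsup := Submodule.finrank_sup_add_finrank_inf_eq s (LinearMap.ker f)
  have hsup_le := (s ⊔ LinearMap.ker f).finrank_le
  have hker := f.finrank_range_add_finrank_ker
  omega

section OrthonormalEigenbasis

open scoped RealInnerProductSpace

variable {E ι : Type*} [NormedAddCommGroup E] [InnerProductSpace ℝ E] [Fintype ι]

theorem OrthonormalBasis.inner_eq_zero_of_mem_span_image (b : OrthonormalBasis ι ℝ E)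
    {s : Set ι} {x : E} (hx : x ∈ Submodule.span ℝ (b '' s)) {j : ι} (hj : j ∉ s) :
    ⟪b j, x⟫ = 0 := by
  rw [← b.coe_toBasis, Module.Basis.mem_span_image] at hx
  rw [← b.repr_apply_apply, ← b.coe_toBasis_repr_apply]
  by_contra h
  exact hj (hx (Finsupp.mem_support_iff.2 h))

theorem OrthonormalBasis.finrank_span_image (b : OrthonormalBasis ι ℝ E) (s : Finset ι) :
    Module.finrank ℝ (Submodule.span ℝ (b '' s)) = s.card := by
  have hli : LinearIndependent ℝ (fun j : (s : Set ι) => b j) := by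
    simpa [Function.comp_def] using
      b.toBasis.linearIndependent.comp Subtype.val Subtype.val_injective
  rw [Set.image_eq_range, finrank_span_eq_card hli]
  simp

variable {T : E →ₗ[ℝ] E} {b : OrthonormalBasis ι ℝ E} {μ : ι → ℝ}

theorem LinearMap.IsSymmetric.inner_apply_self_eq_sum (hT : T.IsSymmetric)
    (hb : ∀ j, T (b j) = μ j • b j) (x : E) :
    ⟪x, T x⟫ = ∑ j, μ j * ⟪b j, x⟫ ^ 2 := by
  rw [← b.sum_inner_mul_inner x (T x)]
  refine Finset.sum_congr rfl fun j _ => ?_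
  rw [← hT, hb, real_inner_smul_left, real_inner_comm x]
  ring

theorem LinearMap.IsSymmetric.inner_apply_self_le_of_mem_span_Iic [Preorder ι]
    (hT : T.IsSymmetric) (hb : ∀ j, T (b j) = μ j • b j) (hμ : Monotone μ) {m : ι} {x : E}
    (hx : x ∈ Submodule.span ℝ (b '' Set.Iic m)) :
    ⟪x, T x⟫ ≤ μ m * ‖x‖ ^ 2 := by
  rw [hT.inner_apply_self_eq_sum hb, ← b.sum_sq_inner_right, Finset.mul_sum]
  refine Finset.sum_le_sum fun j _ => ?_
  by_cases hj : j ≤ m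
  · exact mul_le_mul_of_nonneg_right (hμ hj) (sq_nonneg _)
  · simp [b.inner_eq_zero_of_mem_span_image hx hj]

theorem LinearMap.IsSymmetric.le_inner_apply_self_of_mem_span_Ici [Preorder ι]
    (hT : T.IsSymmetric) (hb : ∀ j, T (b j) = μ j • b j) (hμ : Monotone μ) {m : ι} {x : E}
    (hx : x ∈ Submodule.span ℝ (b '' Set.Ici m)) :
    μ m * ‖x‖ ^ 2 ≤ ⟪x, T x⟫ := by
  rw [hT.inner_apply_self_eq_sum hb, ← b.sum_sq_inner_right, Finset.mul_sum]
  refine Finset.sum_le_sum fun j _ => ?_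
  by_cases hj : m ≤ j
  · exact mul_le_mul_of_nonneg_right (hμ hj) (sq_nonneg _)
  · simp [b.inner_eq_zero_of_mem_span_image hx hj]

theorem LinearMap.IsSymmetric.eigenvalue_add_le_of_finrank_range_add_le [FiniteDimensional ℝ E]
    {n : ℕ} {U : E →ₗ[ℝ] E} (hT : T.IsSymmetric) (hTU : (T + U).IsSymmetric)
    {b c : OrthonormalBasis (Fin n) ℝ E} {μ ν : Fin n → ℝ} (hb : ∀ j, T (b j) = μ j • b j)
    (hc : ∀ j, (T + U) (c j) = ν j • c j) (hμ : Monotone μ) (hν : Monotone ν) {i j : Fin n}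
    (hij : Module.finrank ℝ (LinearMap.range U) + i ≤ j) : ν i ≤ μ j := by
  have hS : (i : ℕ) + 1 ≤
      Module.finrank ℝ ↥(Submodule.span ℝ (b '' Set.Iic j) ⊓ LinearMap.ker U) := by
    have hspan : Module.finrank ℝ (Submodule.span ℝ (b '' Set.Iic j)) = j + 1 := by
      rw [← Finset.coe_Iic, b.finrank_span_image, Fin.card_Iic]
    have := (Submodule.span ℝ (b '' Set.Iic j)).finrank_sub_finrank_range_le_finrank_inf_ker U
    omega
  obtain ⟨x, ⟨⟨hxb, hxU⟩, hxc⟩, hx0⟩ :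
      ∃ x ∈ Submodule.span ℝ (b '' Set.Iic j) ⊓ LinearMap.ker U ⊓
        Submodule.span ℝ (c '' Set.Ici i), x ≠ 0 := by
    apply Submodule.exists_mem_inf_ne_zero_of_finrank_lt
    rw [← Finset.coe_Ici, c.finrank_span_image, Fin.card_Ici,
      Module.finrank_eq_card_basis b.toBasis, Fintype.card_fin]
    omega
  refine le_of_mul_le_mul_right ?_ (by positivity : 0 < ‖x‖ ^ 2)
  calc ν i * ‖x‖ ^ 2 ≤ ⟪x, (T + U) x⟫ := hTU.le_inner_apply_self_of_mem_span_Ici hc hν hxc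
    _ = ⟪x, T x⟫ := by rw [LinearMap.add_apply, LinearMap.mem_ker.1 hxU, add_zero]
    _ ≤ μ j * ‖x‖ ^ 2 := hT.inner_apply_self_le_of_mem_span_Iic hb hμ hxb

end OrthonormalEigenbasis

namespace Matrix.IsHermitian

variable {n : ℕ} {A : Matrix (Fin n) (Fin n) ℝ}

theorem sortedEigenvalues_eq (hA : A.IsHermitian) :
    sortedEigenvalues A = hA.eigenvalues ∘ Tuple.sort hA.eigenvalues := by
  rw [sortedEigenvalues, dif_pos hA]

theorem monotone_sortedEigenvalues (hA : A.IsHermitian) : Monotone (sortedEigenvalues A) := by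
  rw [hA.sortedEigenvalues_eq]
  exact Tuple.monotone_sort _

noncomputable def sortedEigenvectorBasis (hA : A.IsHermitian) :
    OrthonormalBasis (Fin n) ℝ (EuclideanSpace ℝ (Fin n)) :=
  hA.eigenvectorBasis.reindex (Tuple.sort hA.eigenvalues).symm

theorem toEuclideanLin_sortedEigenvectorBasis (hA : A.IsHermitian) (j : Fin n) :
    toEuclideanLin A (hA.sortedEigenvectorBasis j) =
      sortedEigenvalues A j • hA.sortedEigenvectorBasis j := by
  rw [sortedEigenvectorBasis, OrthonormalBasis.reindex_apply, Equiv.symm_symm,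
    hA.sortedEigenvalues_eq]
  apply WithLp.ofLp_injective 2
  simpa [ofLp_toLpLin] using hA.mulVec_eigenvectorBasis (Tuple.sort hA.eigenvalues j)

theorem sortedEigenvalues_add_le {B : Matrix (Fin n) (Fin n) ℝ} (hA : A.IsHermitian)
    (hB : B.IsHermitian) {i j : Fin n} (hij : B.rank + i ≤ j) :
    sortedEigenvalues (A + B) i ≤ sortedEigenvalues A j := by
  have hAB := hA.add hB
  have hrank : Module.finrank ℝ (LinearMap.range (toEuclideanLin B)) = B.rank := by
    rw [toEuclideanLin, toLpLin_eq_toLin, ← rank_eq_finrank_range_toLin]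
  refine (isSymmetric_toEuclideanLin_iff.2 hA).eigenvalue_add_le_of_finrank_range_add_le
    (U := toEuclideanLin B) (c := hAB.sortedEigenvectorBasis) ?_
    hA.toEuclideanLin_sortedEigenvectorBasis ?_
    hA.monotone_sortedEigenvalues hAB.monotone_sortedEigenvalues (hrank ▸ hij)
  · simpa using isSymmetric_toEuclideanLin_iff.2 hAB
  · simpa using hAB.toEuclideanLin_sortedEigenvectorBasis

end Matrix.IsHermitian

theorem Matrix.PosSemidef.sortedEigenvalues_nonneg {n : ℕ} {A : Matrix (Fin n) (Fin n) ℝ}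
    (hA : A.PosSemidef) (i : Fin n) : 0 ≤ sortedEigenvalues A i := by
  rw [hA.1.sortedEigenvalues_eq]
  exact hA.eigenvalues_nonneg _

theorem fundamental_limit_lower_bound_general {n k : ℕ}
    (L Lhat : Matrix (Fin n) (Fin n) ℝ)
    (hL : IsConnLaplacian L)
    (hLhat : Lhat.PosSemidef) (hrank : Lhat.rank ≤ k)
    (φ : ℝ → ℝ) (hanti : AntitoneOn φ (Set.Ici 0))
    (hnonneg : ∀ x ∈ Set.Ici (0 : ℝ), 0 ≤ φ x) :
    ∑ i ∈ Finset.univ.filter (fun i : Fin n => k + 1 ≤ (i : ℕ)),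
        φ (sortedEigenvalues L i) ≤
      ∑ i ∈ Finset.univ.filter (fun i : Fin n => 1 ≤ (i : ℕ)),
        φ (sortedEigenvalues (L + Lhat) i) := by
  have hsum : (L + Lhat).PosSemidef := hL.1.add hLhat
  let shift : Fin n → Fin n := fun j => ⟨j - k, by omega⟩
  refine Finset.sum_le_sum_of_injOn shift ?injOn ?mapsTo ?le
    fun i _ _ => hnonneg _ (hsum.sortedEigenvalues_nonneg i)
  case injOn =>
    intro a ha b hb hab
    simp only [Finset.mem_coe, Finset.mem_filter, Finset.mem_univ, true_and] at ha hb
    simp only [shift, Fin.ext_iff] at hab ⊢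
    omega
  case mapsTo =>
    intro j hj
    simp only [shift, Finset.mem_coe, Finset.mem_filter, Finset.mem_univ, true_and] at hj ⊢
    omega
  case le =>
    intro j hj
    simp only [Finset.mem_filter, Finset.mem_univ, true_and] at hj
    refine hanti (hsum.sortedEigenvalues_nonneg _) (hL.1.sortedEigenvalues_nonneg j) ?_
    exact hL.1.1.sortedEigenvalues_add_le hLhat.1 (by simp only [shift]; omega)

/-- Fundamental limit: augmenting a connected-graph Laplacian by a PSD matrix of rank at most
`k` cannot reduce Σ_{i=2}^{n} φ(λ_i) below Σ_{i=k+2}^{n} φ(λ_i(L)). -/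
theorem fundamental_limit_lower_bound {n k : ℕ}
    (L Lhat : Matrix (Fin n) (Fin n) ℝ)
    (hL : IsConnLaplacian L) (hk1 : 1 ≤ k) (hk2 : k ≤ n - 2)
    (hLhat : Lhat.PosSemidef) (hrank : Lhat.rank ≤ k)
    (φ : ℝ → ℝ) (hanti : AntitoneOn φ (Set.Ici 0)) (hconv : ConvexOn ℝ (Set.Ici 0) φ)
    (hnonneg : ∀ x ∈ Set.Ici (0 : ℝ), 0 ≤ φ x) :
    ∑ i ∈ Finset.univ.filter (fun i : Fin n => k + 1 ≤ (i : ℕ)),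
        φ (sortedEigenvalues L i) ≤
      ∑ i ∈ Finset.univ.filter (fun i : Fin n => 1 ≤ (i : ℕ)),
        φ (sortedEigenvalues (L + Lhat) i) :=
  fundamental_limit_lower_bound_general L Lhat hL hLhat hrank φ hanti hnonneg
end

section
/- Let L and L_T each be the Laplacian of a connected weighted graph on n nodes (in particular L_T is symmetric positive semidefinite with L_T𝟙 = 0 and rank n−1, e.g. the Laplacian of a weighted spanning tree). Let φ : (0,∞) → ℝ be a continuous decreasing convex function with lim_{λ→∞} φ(λ) = 0. Then lim_{κ→∞} Σ_{i=2}^{n} φ(λ_i(L + κ L_T)) = 0, where λ_i(L + κL_T) denote the eigenvalues of L + κL_T listed in increasing order. In words: the systemic performance measure ρ(L) = Σ_{i=2}^n φ(λ_i(L)) can be improved arbitrarily close to its ultimate limit by adding n−1 links forming a spanning tree with sufficiently large weights. -/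
open Filter Finset Matrix

/-!
Since `φ(λ) → 0` as `λ → ∞`, it suffices that every eigenvalue `λᵢ(L + κ L_T)` with `i ≥ 2` tends
to infinity with `κ`. Because `L_T + 𝟙𝟙ᵀ` is positive definite, the quadratic form of `L_T` is
bounded below by `μ ‖v‖²` on the hyperplane `𝟙^⊥` for some `μ > 0`, hence that of `L + κ L_T` by
`κ μ ‖v‖²`. A min-max argument then gives `λᵢ(L + κ L_T) ≥ κ μ` for `i ≥ 2`: two orthonormal
eigenvectors with eigenvalues below `κ μ` span a plane that meets `𝟙^⊥`.
-/

theorem exists_sq_add_sq_pos_and_mul_add_mul_eq_zero (x y : ℝ) :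
    ∃ a b : ℝ, 0 < a ^ 2 + b ^ 2 ∧ a * x + b * y = 0 := by
  by_cases hxy : x = 0 ∧ y = 0
  · exact ⟨1, 0, by norm_num, by simp [hxy.1, hxy.2]⟩
  · refine ⟨y, -x, ?_, by ring⟩
    rcases not_and_or.1 hxy with hx | hy
    · nlinarith [sq_pos_of_ne_zero hx, sq_nonneg y]
    · nlinarith [sq_pos_of_ne_zero hy, sq_nonneg x]

namespace Matrix

variable {ι : Type*} [Fintype ι]

theorem dotProduct_add_vecMulVec_self_mulVec {R : Type*} [CommRing R]
    (M : Matrix ι ι R) (u v : ι → R) :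
    v ⬝ᵥ ((M + vecMulVec u u) *ᵥ v) = v ⬝ᵥ (M *ᵥ v) + (u ⬝ᵥ v) ^ 2 := by
  rw [add_mulVec, dotProduct_add, vecMulVec_mulVec, op_smul_eq_smul, dotProduct_smul,
    smul_eq_mul, dotProduct_comm v u, sq]

variable [DecidableEq ι]

open scoped MatrixOrder in
theorem PosDef.exists_pos_mul_dotProduct_self_le {B : Matrix ι ι ℝ} (hB : B.PosDef) :
    ∃ μ > 0, ∀ v : ι → ℝ, μ * (v ⬝ᵥ v) ≤ v ⬝ᵥ (B *ᵥ v) := by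
  cases isEmpty_or_nonempty ι
  · exact ⟨1, one_pos, fun v => by simp [dotProduct]⟩
  obtain ⟨μ, hμ, hμB⟩ := (CFC.exists_pos_algebraMap_le_iff hB.isHermitian.isSelfAdjoint).2
    fun x hx => by
      obtain ⟨i, rfl⟩ := hB.isHermitian.spectrum_real_eq_range_eigenvalues ▸ hx
      exact hB.eigenvalues_pos i
  refine ⟨μ, hμ, fun v => ?_⟩
  simpa [sub_mulVec, Algebra.algebraMap_eq_smul_one, smul_mulVec, dotProduct_sub, sub_nonneg]
    using (le_iff.1 hμB).dotProduct_mulVec_nonneg v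

namespace IsHermitian

variable {A : Matrix ι ι ℝ} (hA : A.IsHermitian)

theorem dotProduct_eigenvectorBasis (j k : ι) :
    ⇑(hA.eigenvectorBasis j) ⬝ᵥ ⇑(hA.eigenvectorBasis k) = if j = k then 1 else 0 := by
  simpa [EuclideanSpace.inner_eq_star_dotProduct, eq_comm] using
    orthonormal_iff_ite.1 hA.eigenvectorBasis.orthonormal k j

theorem exists_dotProduct_eq_zero_and_dotProduct_mulVec_lt (w : ι → ℝ) {j k : ι} (hjk : j ≠ k)
    {c : ℝ} (hj : hA.eigenvalues j < c) (hk : hA.eigenvalues k < c) :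
    ∃ v, w ⬝ᵥ v = 0 ∧ v ⬝ᵥ (A *ᵥ v) < c * (v ⬝ᵥ v) := by
  set μj := hA.eigenvalues j
  set μk := hA.eigenvalues k
  obtain ⟨a, b, hab, hw⟩ := exists_sq_add_sq_pos_and_mul_add_mul_eq_zero
    (w ⬝ᵥ ⇑(hA.eigenvectorBasis j)) (w ⬝ᵥ ⇑(hA.eigenvectorBasis k))
  refine ⟨a • ⇑(hA.eigenvectorBasis j) + b • ⇑(hA.eigenvectorBasis k), ?_, ?_⟩
  · simpa [dotProduct_add, dotProduct_smul] using hw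
  simp only [mulVec_add, mulVec_smul, mulVec_eigenvectorBasis, dotProduct_add, add_dotProduct,
    smul_dotProduct, dotProduct_smul, dotProduct_eigenvectorBasis, hjk, hjk.symm, if_true,
    if_false, smul_eq_mul, mul_one, mul_zero, add_zero, zero_add]
  calc a * (μj * a) + b * (μk * b) ≤ max μj μk * (a ^ 2 + b ^ 2) := by
        nlinarith [mul_le_mul_of_nonneg_left (le_max_left μj μk) (sq_nonneg a),
          mul_le_mul_of_nonneg_left (le_max_right μj μk) (sq_nonneg b)]
    _ < c * (a ^ 2 + b ^ 2) := mul_lt_mul_of_pos_right (max_lt hj hk) hab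
    _ = c * (a * a + b * b) := by ring

end IsHermitian

end Matrix

theorem le_sortedEigenvalues_of_le_dotProduct_mulVec {n : ℕ} {A : Matrix (Fin n) (Fin n) ℝ}
    (hA : A.IsHermitian) (w : Fin n → ℝ) {c : ℝ}
    (h : ∀ v, w ⬝ᵥ v = 0 → c * (v ⬝ᵥ v) ≤ v ⬝ᵥ (A *ᵥ v)) {i : Fin n} (hi : 1 ≤ (i : ℕ)) :
    c ≤ sortedEigenvalues A i := by
  rw [sortedEigenvalues, dif_pos hA]
  by_contra! hlt
  have h0i : (⟨0, i.pos⟩ : Fin n) < i := Fin.lt_def.2 hi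
  have h0 := (Tuple.monotone_sort hA.eigenvalues h0i.le).trans_lt hlt
  obtain ⟨v, hv, hvA⟩ := hA.exists_dotProduct_eq_zero_and_dotProduct_mulVec_lt w
    ((Tuple.sort hA.eigenvalues).injective.ne h0i.ne) h0 hlt
  exact (h v hv).not_gt hvA

namespace IsConnLaplacian

variable {n : ℕ} {M : Matrix (Fin n) (Fin n) ℝ}

theorem posDef_add_vecMulVec_one (hM : IsConnLaplacian M) : (M + vecMulVec 1 1).PosDef := by
  refine PosDef.of_dotProduct_mulVec_pos (hM.1.add (posSemidef_vecMulVec_self_star 1)).isHermitian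
    fun v hv => ?_
  rw [star_trivial, dotProduct_add_vecMulVec_self_mulVec]
  have hMv : 0 ≤ v ⬝ᵥ (M *ᵥ v) := by simpa using hM.1.dotProduct_mulVec_nonneg v
  refine lt_of_le_of_ne (by positivity) fun h => hv ?_
  obtain ⟨hMv0, hsum⟩ : v ⬝ᵥ (M *ᵥ v) = 0 ∧ 1 ⬝ᵥ v = 0 := by
    constructor <;> nlinarith [sq_nonneg (1 ⬝ᵥ v)]
  obtain ⟨c, rfl⟩ := hM.2.2 v ((hM.1.dotProduct_mulVec_zero_iff v).1 (by simpa using hMv0))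
  have hnc : (n : ℝ) * c = 0 := by simpa [one_dotProduct] using hsum
  rcases mul_eq_zero.1 hnc with hn | rfl
  · obtain rfl : n = 0 := by exact_mod_cast hn
    exact Subsingleton.elim _ _
  · rfl

theorem exists_pos_mul_dotProduct_self_le (hM : IsConnLaplacian M) :
    ∃ μ > 0, ∀ v : Fin n → ℝ, 1 ⬝ᵥ v = 0 → μ * (v ⬝ᵥ v) ≤ v ⬝ᵥ (M *ᵥ v) := by
  obtain ⟨μ, hμ, hle⟩ := hM.posDef_add_vecMulVec_one.exists_pos_mul_dotProduct_self_le
  refine ⟨μ, hμ, fun v hv => ?_⟩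
  simpa only [dotProduct_add_vecMulVec_self_mulVec, hv, sq, mul_zero, add_zero] using hle v

end IsConnLaplacian

theorem tendsto_sortedEigenvalues_add_smul_atTop {n : ℕ} {L M : Matrix (Fin n) (Fin n) ℝ}
    (hL : L.PosSemidef) (hM : IsConnLaplacian M) {i : Fin n} (hi : 1 ≤ (i : ℕ)) :
    Tendsto (fun κ : ℝ => sortedEigenvalues (L + κ • M) i) atTop atTop := by
  obtain ⟨μ, hμ, hMμ⟩ := hM.exists_pos_mul_dotProduct_self_le
  refine tendsto_atTop_mono' _ ?_ (tendsto_id.atTop_mul_const hμ)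
  filter_upwards [eventually_ge_atTop 0] with κ hκ
  refine le_sortedEigenvalues_of_le_dotProduct_mulVec (hL.add (hM.1.smul hκ)).isHermitian 1
    (fun v hv => ?_) hi
  calc id κ * μ * (v ⬝ᵥ v) = κ * (μ * (v ⬝ᵥ v)) := mul_assoc _ _ _
    _ ≤ κ * (v ⬝ᵥ (M *ᵥ v)) := mul_le_mul_of_nonneg_left (hMμ v hv) hκ
    _ ≤ v ⬝ᵥ (L *ᵥ v) + κ * (v ⬝ᵥ (M *ᵥ v)) :=
      le_add_of_nonneg_left (by simpa using hL.dotProduct_mulVec_nonneg v)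
    _ = v ⬝ᵥ ((L + κ • M) *ᵥ v) := by
      rw [add_mulVec, smul_mulVec, dotProduct_add, dotProduct_smul, smul_eq_mul]

theorem tendsto_performance_add_spanning_tree_general {n : ℕ}
    (L LT : Matrix (Fin n) (Fin n) ℝ)
    (hL : IsConnLaplacian L) (hLT : IsConnLaplacian LT)
    (φ : ℝ → ℝ)
    (hlim : Tendsto φ atTop (nhds 0)) :
    Tendsto (fun κ : ℝ =>
        ∑ i ∈ Finset.univ.filter (fun i : Fin n => 1 ≤ (i : ℕ)),
          φ (sortedEigenvalues (L + κ • LT) i)) atTop (nhds 0) := by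
  simpa using tendsto_finsetSum _ fun i hi =>
    hlim.comp (tendsto_sortedEigenvalues_add_smul_atTop hL.1 hLT (mem_filter.1 hi).2)

/-- Adding a spanning-tree Laplacian with weight `κ → ∞` drives the systemic performance
measure Σ_{i=2}^n φ(λ_i) to `0`. -/
theorem tendsto_performance_add_spanning_tree {n : ℕ}
    (L LT : Matrix (Fin n) (Fin n) ℝ)
    (hL : IsConnLaplacian L) (hLT : IsConnLaplacian LT)
    (φ : ℝ → ℝ) (hcont : ContinuousOn φ (Set.Ioi 0))
    (hanti : AntitoneOn φ (Set.Ioi 0)) (hconv : ConvexOn ℝ (Set.Ioi 0) φ)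
    (hlim : Tendsto φ atTop (nhds 0)) :
    Tendsto (fun κ : ℝ =>
        ∑ i ∈ Finset.univ.filter (fun i : Fin n => 1 ≤ (i : ℕ)),
          φ (sortedEigenvalues (L + κ • LT) i)) atTop (nhds 0) :=
  tendsto_performance_add_spanning_tree_general L LT hL hLT φ hlim
end

section
/- Let L be the Laplacian of a connected weighted graph on n nodes, let e = {i,j} be a pair of distinct indices, and let w > 0. Then L + wL_e is again the Laplacian of a connected weighted graph, and its Moore–Penrose pseudoinverse satisfies the rank-one update formula (L + wL_e)^† = L^† − (1/(w⁻¹ + r_e(L))) U_e, where U_e = (L^† (δ_i − δ_j)) (L^† (δ_i − δ_j))ᵀ. -/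
open Filter Finset Matrix

/-- The all-ones `n × n` matrix `J`. -/
def Jmat (n : ℕ) : Matrix (Fin n) (Fin n) ℝ := Matrix.of fun _ _ => (1 : ℝ)

/-- Moore–Penrose pseudoinverse of a connected-graph Laplacian:
`L^† = (L + (1/n) J)⁻¹ − (1/n) J`. -/
noncomputable def lapPinv {n : ℕ} (L : Matrix (Fin n) (Fin n) ℝ) : Matrix (Fin n) (Fin n) ℝ :=
  (L + (1 / (n : ℝ)) • Jmat n)⁻¹ - (1 / (n : ℝ)) • Jmat n

/-- The single-edge Laplacian `L_e = (δ_i − δ_j)(δ_i − δ_j)ᵀ`. -/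
def edgeLap {n : ℕ} (i j : Fin n) : Matrix (Fin n) (Fin n) ℝ :=
  Matrix.vecMulVec (Pi.single i 1 - Pi.single j 1) (Pi.single i 1 - Pi.single j 1)

/-- Effective resistance `r_e(L^m)` between nodes `i` and `j`, computed from `L^{†,m}`. -/
noncomputable def reff {n : ℕ} (L : Matrix (Fin n) (Fin n) ℝ) (m : ℕ) (i j : Fin n) : ℝ :=
  (lapPinv L ^ m) i i + (lapPinv L ^ m) j j - 2 * (lapPinv L ^ m) i j

/-! Put `M = L + J/n`. Since `J` is positive on the kernel `span 𝟙` of `L`, `M` is invertible,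
`L^† = M⁻¹ - J/n`, and `M⁻¹ u = L^† u` for `u = δ_i - δ_j ⊥ 𝟙`. As `(L + w L_e) + J/n = M + w u uᵀ`,
the Sherman–Morrison formula gives the update; its denominator `w⁻¹ + uᵀ M⁻¹ u = w⁻¹ + r_e(L)` is
positive because `M⁻¹` is positive semidefinite. -/

namespace Matrix

open scoped ComplexOrder

variable {ι : Type*} [Fintype ι]

/-- The Sherman–Morrison formula. -/
theorem inv_add_vecMulVec {K : Type*} [Field K] [DecidableEq ι] {A : Matrix ι ι K}
    (hA : IsUnit A.det) (u v : ι → K) (h : 1 + v ⬝ᵥ (A⁻¹ *ᵥ u) ≠ 0) :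
    (A + vecMulVec u v)⁻¹ =
      A⁻¹ - (1 + v ⬝ᵥ (A⁻¹ *ᵥ u))⁻¹ • vecMulVec (A⁻¹ *ᵥ u) (v ᵥ* A⁻¹) := by
  refine inv_eq_right_inv ?_
  have hA_mul : A * vecMulVec (A⁻¹ *ᵥ u) (v ᵥ* A⁻¹) = vecMulVec u (v ᵥ* A⁻¹) := by
    rw [mul_vecMulVec, mulVec_mulVec, mul_nonsing_inv A hA, one_mulVec]
  have huv_mul : vecMulVec u v * vecMulVec (A⁻¹ *ᵥ u) (v ᵥ* A⁻¹) =
      (v ⬝ᵥ (A⁻¹ *ᵥ u)) • vecMulVec u (v ᵥ* A⁻¹) := by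
    rw [vecMulVec_mul_vecMulVec, vecMulVec_smul]
  rw [add_mul, mul_sub, mul_sub, mul_nonsing_inv A hA, vecMulVec_mul, Matrix.mul_smul,
    Matrix.mul_smul, hA_mul, huv_mul, smul_smul]
  linear_combination (norm := module) -(inv_mul_cancel₀ h • vecMulVec u (v ᵥ* A⁻¹))

theorem IsSymm.inv_add_smul_vecMulVec_self {K : Type*} [Field K] [DecidableEq ι]
    {A : Matrix ι ι K} (hA : A.IsSymm) (hdet : IsUnit A.det) (u : ι → K) {w : K} (hw : w ≠ 0)
    (h : w⁻¹ + u ⬝ᵥ (A⁻¹ *ᵥ u) ≠ 0) :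
    (A + w • vecMulVec u u)⁻¹ =
      A⁻¹ - (1 / (w⁻¹ + u ⬝ᵥ (A⁻¹ *ᵥ u))) • vecMulVec (A⁻¹ *ᵥ u) (A⁻¹ *ᵥ u) := by
  have h' : 1 + (w • u) ⬝ᵥ (A⁻¹ *ᵥ u) ≠ 0 := by
    rw [smul_dotProduct, smul_eq_mul, ← mul_inv_cancel₀ hw, ← mul_add]
    exact mul_ne_zero hw h
  have hvecMul : (w • u) ᵥ* A⁻¹ = w • (A⁻¹ *ᵥ u) := by
    rw [smul_vecMul, ← mulVec_transpose, hA.inv]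
  rw [← vecMulVec_smul, inv_add_vecMulVec hdet u (w • u) h', hvecMul, vecMulVec_smul, smul_smul,
    smul_dotProduct, smul_eq_mul]
  congr 2
  field_simp

theorem IsSymm.single_sub_single_dotProduct_mulVec {R : Type*} [CommRing R] [DecidableEq ι]
    {P : Matrix ι ι R} (hP : P.IsSymm) (i j : ι) :
    (Pi.single i 1 - Pi.single j 1) ⬝ᵥ (P *ᵥ (Pi.single i 1 - Pi.single j 1)) =
      P i i + P j j - 2 * P i j := by
  simp only [mulVec_sub, sub_dotProduct, dotProduct_sub, single_one_dotProduct, mulVec_single_one,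
    col_apply]
  rw [hP.apply i j]
  ring

theorem PosSemidef.mulVec_eq_zero_of_add {𝕜 : Type*} [RCLike 𝕜] {A B : Matrix ι ι 𝕜}
    (hA : A.PosSemidef) (hB : B.PosSemidef) {x : ι → 𝕜} (h : (A + B) *ᵥ x = 0) :
    A *ᵥ x = 0 ∧ B *ᵥ x = 0 := by
  have hsum : star x ⬝ᵥ (A *ᵥ x) + star x ⬝ᵥ (B *ᵥ x) = 0 := by
    rw [← dotProduct_add, ← add_mulVec, h, dotProduct_zero]
  rw [add_eq_zero_iff_of_nonneg (hA.dotProduct_mulVec_nonneg x) (hB.dotProduct_mulVec_nonneg x),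
    hA.dotProduct_mulVec_zero_iff, hB.dotProduct_mulVec_zero_iff] at hsum
  exact hsum

end Matrix

section Laplacian

variable {n : ℕ}

theorem Jmat_eq_vecMulVec : Jmat n = vecMulVec (fun _ => 1) (fun _ => 1) := by
  ext; simp [Jmat, vecMulVec_apply]

theorem posSemidef_Jmat : (Jmat n).PosSemidef := by
  simpa [Jmat_eq_vecMulVec] using posSemidef_vecMulVec_self_star (fun _ : Fin n => (1 : ℝ))

theorem isSymm_Jmat : (Jmat n).IsSymm := by
  rw [Jmat_eq_vecMulVec]; exact transpose_vecMulVec _ _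

theorem Jmat_mulVec_eq_zero {u : Fin n → ℝ} (hu : ∑ k, u k = 0) : Jmat n *ᵥ u = 0 := by
  ext; simp [Jmat, mulVec, dotProduct, hu]

theorem posSemidef_edgeLap (i j : Fin n) : (edgeLap i j).PosSemidef := by
  simpa [edgeLap] using posSemidef_vecMulVec_self_star (Pi.single i 1 - Pi.single j 1 : Fin n → ℝ)

theorem edgeLap_mulVec_one (i j : Fin n) : edgeLap i j *ᵥ (fun _ => 1) = 0 := by
  ext; simp [edgeLap, vecMulVec_mulVec, sub_dotProduct]

theorem IsConnLaplacian.isSymm {L : Matrix (Fin n) (Fin n) ℝ} (hL : IsConnLaplacian L) :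
    L.IsSymm :=
  hL.1.1

theorem IsConnLaplacian.add_posSemidef {L B : Matrix (Fin n) (Fin n) ℝ} (hL : IsConnLaplacian L)
    (hB : B.PosSemidef) (hB1 : B *ᵥ (fun _ => 1) = 0) : IsConnLaplacian (L + B) := by
  obtain ⟨hLpsd, hL1, hLker⟩ := hL
  refine ⟨hLpsd.add hB, by rw [add_mulVec, hL1, hB1, add_zero], fun v hv => ?_⟩
  exact hLker v (hLpsd.mulVec_eq_zero_of_add hB hv).1

theorem IsConnLaplacian.isUnit_add_smul_Jmat {L : Matrix (Fin n) (Fin n) ℝ}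
    (hL : IsConnLaplacian L) {c : ℝ} (hc : 0 < c) : IsUnit (L + c • Jmat n) := by
  refine mulVec_injective_iff_isUnit.mp ?_
  rw [← coe_mulVecLin, ← LinearMap.ker_eq_bot, ker_mulVecLin_eq_bot_iff]
  intro x hx
  obtain ⟨hLx, hJx⟩ := hL.1.mulVec_eq_zero_of_add (posSemidef_Jmat.smul hc.le) hx
  obtain ⟨k, rfl⟩ := hL.2.2 x hLx
  funext a
  simpa [Jmat, mulVec, dotProduct, a.pos.ne', hc.ne'] using congrFun hJx a

theorem IsConnLaplacian.isSymm_lapPinv {L : Matrix (Fin n) (Fin n) ℝ} (hL : IsConnLaplacian L) :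
    (lapPinv L).IsSymm :=
  (hL.isSymm.add (isSymm_Jmat.smul _)).inv.sub (isSymm_Jmat.smul _)

theorem lapPinv_mulVec_of_sum_eq_zero (L : Matrix (Fin n) (Fin n) ℝ) {u : Fin n → ℝ}
    (hu : ∑ k, u k = 0) : lapPinv L *ᵥ u = (L + (1 / (n : ℝ)) • Jmat n)⁻¹ *ᵥ u := by
  rw [lapPinv, sub_mulVec, smul_mulVec, Jmat_mulVec_eq_zero hu, smul_zero, sub_zero]

theorem IsConnLaplacian.reff_one_eq {L : Matrix (Fin n) (Fin n) ℝ} (hL : IsConnLaplacian L)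
    (i j : Fin n) :
    reff L 1 i j = (Pi.single i 1 - Pi.single j 1) ⬝ᵥ
      (lapPinv L *ᵥ (Pi.single i 1 - Pi.single j 1)) := by
  rw [reff, pow_one, hL.isSymm_lapPinv.single_sub_single_dotProduct_mulVec]

end Laplacian

theorem lapPinv_rank_one_update_general {n : ℕ}
    (L : Matrix (Fin n) (Fin n) ℝ) (hL : IsConnLaplacian L)
    (i j : Fin n) (w : ℝ) (hw : 0 < w) :
    IsConnLaplacian (L + w • edgeLap i j) ∧
      lapPinv (L + w • edgeLap i j) =
        lapPinv L - (1 / (w⁻¹ + reff L 1 i j)) •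
          Matrix.vecMulVec (lapPinv L *ᵥ (Pi.single i 1 - Pi.single j 1))
            (lapPinv L *ᵥ (Pi.single i 1 - Pi.single j 1)) := by
  set u : Fin n → ℝ := Pi.single i 1 - Pi.single j 1
  set c : ℝ := 1 / (n : ℝ)
  have hc : 0 < c := by have := i.pos; positivity
  have hu : ∑ k, u k = 0 := by simp [u, Finset.sum_sub_distrib]
  set M : Matrix (Fin n) (Fin n) ℝ := L + c • Jmat n with hM
  have hMdet : IsUnit M.det := (isUnit_iff_isUnit_det M).mp (hL.isUnit_add_smul_Jmat hc)
  have hMu : M⁻¹ *ᵥ u = lapPinv L *ᵥ u := (lapPinv_mulVec_of_sum_eq_zero L hu).symm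
  have hr : 0 ≤ u ⬝ᵥ (M⁻¹ *ᵥ u) := by
    simpa using (hL.1.add (posSemidef_Jmat.smul hc.le)).inv.dotProduct_mulVec_nonneg u
  refine ⟨hL.add_posSemidef ((posSemidef_edgeLap i j).smul hw.le)
    (by rw [smul_mulVec, edgeLap_mulVec_one, smul_zero]), ?_⟩
  calc lapPinv (L + w • edgeLap i j)
      = (M + w • vecMulVec u u)⁻¹ - c • Jmat n := by
        rw [lapPinv, edgeLap, hM, add_right_comm]
    _ = _ := by
        rw [(hL.isSymm.add (isSymm_Jmat.smul c)).inv_add_smul_vecMulVec_self hMdet u hw.ne'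
          (by positivity), hMu, hL.reff_one_eq, lapPinv]
        abel

/-- Rank-one update of the Moore–Penrose pseudoinverse of a connected-graph Laplacian
under addition of a weighted edge. -/
theorem lapPinv_rank_one_update {n : ℕ}
    (L : Matrix (Fin n) (Fin n) ℝ) (hL : IsConnLaplacian L)
    (i j : Fin n) (hij : i ≠ j) (w : ℝ) (hw : 0 < w) :
    IsConnLaplacian (L + w • edgeLap i j) ∧
      lapPinv (L + w • edgeLap i j) =
        lapPinv L - (1 / (w⁻¹ + reff L 1 i j)) •
          Matrix.vecMulVec (lapPinv L *ᵥ (Pi.single i 1 - Pi.single j 1))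
            (lapPinv L *ᵥ (Pi.single i 1 - Pi.single j 1)) :=
  lapPinv_rank_one_update_general L hL i j w hw
end

section
/- Let L be the Laplacian of a connected weighted graph on n nodes and let e = {i,j} be a pair of distinct indices. Then for every weight w > 0, the improvement of the spectral zeta function ζ₁(L) = tr(L^†) obtained by adding the weighted edge w·L_e is bounded by a fundamental limit that is independent of w: ζ₁(L) − ζ₁(L + wL_e) ≤ r_e(L²)/r_e(L). -/
open Filter Finset Matrix

/-!
With `M = L + J/n`, which is positive definite and fixes `𝟙`, the powers of the
pseudoinverse are `L^{†,m} = M⁻ᵐ - J/n` for `m ≥ 1`; since `u = δ_i - δ_j` is orthogonal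
to `𝟙`, this gives `r_e(L^m) = uᵀ M⁻ᵐ u`. Adding `w L_e` adds the rank-one term `w u uᵀ`
to `M`, and the Sherman–Morrison formula turns the improvement of `ζ₁` into
`w r_e(L²) / (1 + w r_e(L))`, which increases in `w` towards `r_e(L²) / r_e(L)`.
-/

theorem inv_add_smul_vecMulVec {K ι : Type*} [Field K] [Fintype ι] [DecidableEq ι]
    {A : Matrix ι ι K} (hA : IsUnit A.det) (u v : ι → K) (w : K)
    (h : 1 + w * (v ⬝ᵥ A⁻¹ *ᵥ u) ≠ 0) :
    (A + w • vecMulVec u v)⁻¹ =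
      A⁻¹ - (w / (1 + w * (v ⬝ᵥ A⁻¹ *ᵥ u))) • vecMulVec (A⁻¹ *ᵥ u) (v ᵥ* A⁻¹) := by
  set r := v ⬝ᵥ A⁻¹ *ᵥ u
  set c := w / (1 + w * r)
  have hcoeff : w - c - c * w * r = 0 := by
    simp only [c]; field_simp; ring
  have hAu : A *ᵥ (A⁻¹ *ᵥ u) = u := by rw [mulVec_mulVec, mul_nonsing_inv A hA, one_mulVec]
  refine inv_eq_right_inv ?_
  calc (A + w • vecMulVec u v) * (A⁻¹ - c • vecMulVec (A⁻¹ *ᵥ u) (v ᵥ* A⁻¹))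
      = 1 + (w - c - c * w * r) • vecMulVec u (v ᵥ* A⁻¹) := by
        rw [add_mul, mul_sub, mul_sub, mul_nonsing_inv A hA, Matrix.mul_smul, mul_vecMulVec, hAu,
          Matrix.smul_mul, vecMulVec_mul, Matrix.smul_mul, Matrix.mul_smul,
          vecMulVec_mul_vecMulVec, vecMulVec_smul]
        module
    _ = 1 := by rw [hcoeff, zero_smul, add_zero]

theorem trace_inv_sub_trace_inv_add_smul_vecMulVec {K ι : Type*} [Field K] [Fintype ι]
    [DecidableEq ι] {A : Matrix ι ι K} (hA : IsUnit A.det) (u v : ι → K) (w : K)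
    (h : 1 + w * (v ⬝ᵥ A⁻¹ *ᵥ u) ≠ 0) :
    A⁻¹.trace - (A + w • vecMulVec u v)⁻¹.trace =
      w * (v ⬝ᵥ (A⁻¹ ^ 2) *ᵥ u) / (1 + w * (v ⬝ᵥ A⁻¹ *ᵥ u)) := by
  rw [inv_add_smul_vecMulVec hA u v w h, trace_sub, trace_smul, trace_vecMulVec,
    dotProduct_comm (A⁻¹ *ᵥ u), ← dotProduct_mulVec, mulVec_mulVec, ← sq, smul_eq_mul]
  ring

theorem sub_pow_succ_of_absorbing {R : Type*} [Ring R] {a p : R} (hap : a * p = p)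
    (hpa : p * a = p) (hp : IsIdempotentElem p) (m : ℕ) :
    (a - p) ^ (m + 1) = a ^ (m + 1) - p := by
  have hpow : ∀ k : ℕ, a ^ (k + 1) * p = p := by
    intro k
    induction k with
    | zero => simpa using hap
    | succ k ih => rw [pow_succ', mul_assoc, ih, hap]
  induction m with
  | zero => simp
  | succ m ih =>
    rw [pow_succ, ih, sub_mul, mul_sub, mul_sub, ← pow_succ, hpow, hpa, hp.eq]
    abel

theorem div_one_add_mul_le_div {w r₁ r₂ : ℝ} (hw : 0 ≤ w) (hr₁ : 0 < r₁) (hr₂ : 0 ≤ r₂) :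
    w * r₂ / (1 + w * r₁) ≤ r₂ / r₁ := by
  rw [div_le_div_iff₀ (by positivity) hr₁]
  nlinarith [mul_nonneg hw hr₂]

section Laplacian

variable {n : ℕ}

theorem Jmat_mulVec (v : Fin n → ℝ) : Jmat n *ᵥ v = fun _ => ∑ k, v k := by
  ext; simp [Jmat, mulVec, dotProduct]

theorem isIdempotentElem_inv_card_smul_Jmat (hn : n ≠ 0) :
    IsIdempotentElem ((1 / (n : ℝ)) • Jmat n) := by
  rw [IsIdempotentElem, Jmat_eq_vecMulVec, Matrix.smul_mul, Matrix.mul_smul,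
    vecMulVec_mul_vecMulVec]
  ext
  simp [vecMulVec_apply, dotProduct]
  field_simp

noncomputable def shiftedLap (L : Matrix (Fin n) (Fin n) ℝ) : Matrix (Fin n) (Fin n) ℝ :=
  L + (1 / (n : ℝ)) • Jmat n

theorem lapPinv_eq (L : Matrix (Fin n) (Fin n) ℝ) :
    lapPinv L = (shiftedLap L)⁻¹ - (1 / (n : ℝ)) • Jmat n := rfl

def edgeVec (i j : Fin n) : Fin n → ℝ := Pi.single i 1 - Pi.single j 1

theorem shiftedLap_add_smul_edgeLap (L : Matrix (Fin n) (Fin n) ℝ) (i j : Fin n) (w : ℝ) :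
    shiftedLap (L + w • edgeLap i j) =
      shiftedLap L + w • vecMulVec (edgeVec i j) (edgeVec i j) := by
  rw [shiftedLap, shiftedLap, edgeLap, edgeVec, add_right_comm]

theorem edgeVec_ne_zero {i j : Fin n} (hij : i ≠ j) : edgeVec i j ≠ 0 := fun h => by
  simpa [edgeVec, hij.symm] using congrFun h i

theorem edgeVec_dotProduct_mulVec {A : Matrix (Fin n) (Fin n) ℝ} (hA : A.IsHermitian)
    (i j : Fin n) : edgeVec i j ⬝ᵥ A *ᵥ edgeVec i j = A i i + A j j - 2 * A i j := by
  have hji : A j i = A i j := by simpa using hA.apply i j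
  simp [edgeVec, mulVec_sub, dotProduct_sub, sub_dotProduct, mulVec_single, single_dotProduct,
    hji]
  ring

end Laplacian

namespace IsConnLaplacian

variable {n : ℕ} {L : Matrix (Fin n) (Fin n) ℝ}

theorem posDef_shiftedLap (hL : IsConnLaplacian L) : (shiftedLap L).PosDef := by
  obtain ⟨hpsd, -, hker⟩ := hL
  have hJ : ((1 / (n : ℝ)) • Jmat n).PosSemidef := by
    rw [Jmat_eq_vecMulVec]
    exact (posSemidef_vecMulVec_self_star _).smul (by positivity)
  refine PosDef.of_dotProduct_mulVec_pos (hpsd.1.add hJ.1) fun x hx => ?_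
  rw [shiftedLap, add_mulVec, dotProduct_add]
  refine (add_nonneg (hpsd.dotProduct_mulVec_nonneg x) (hJ.dotProduct_mulVec_nonneg x)).lt_of_ne
    fun h => hx ?_
  -- both forms are nonnegative, so each vanishes: `x` is constant and has zero sum
  have hLx : L *ᵥ x = 0 := (hpsd.dotProduct_mulVec_zero_iff x).mp
    (by linarith [hpsd.dotProduct_mulVec_nonneg x, hJ.dotProduct_mulVec_nonneg x])
  obtain ⟨c, rfl⟩ := hker x hLx
  rw [hLx, dotProduct_zero, zero_add, smul_mulVec, Jmat_mulVec] at h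
  obtain rfl | rfl : n = 0 ∨ c = 0 := by simp [dotProduct] at h; tauto
  · exact Subsingleton.elim _ _
  · rfl

theorem shiftedLap_mulVec_one (hL : IsConnLaplacian L) (hn : n ≠ 0) :
    shiftedLap L *ᵥ (fun _ => 1) = fun _ => 1 := by
  ext
  simp [shiftedLap, add_mulVec, smul_mulVec, hL.2.1, Jmat_mulVec, hn]

theorem inv_shiftedLap_mulVec_one (hL : IsConnLaplacian L) (hn : n ≠ 0) :
    (shiftedLap L)⁻¹ *ᵥ (fun _ => 1) = fun _ => 1 := by
  conv_lhs => rw [← hL.shiftedLap_mulVec_one hn]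
  rw [mulVec_mulVec, nonsing_inv_mul _ hL.posDef_shiftedLap.det_pos.ne'.isUnit, one_mulVec]

theorem lapPinv_pow_succ (hL : IsConnLaplacian L) (hn : n ≠ 0) (m : ℕ) :
    lapPinv L ^ (m + 1) = (shiftedLap L)⁻¹ ^ (m + 1) - (1 / (n : ℝ)) • Jmat n := by
  have hsymm : ((shiftedLap L)⁻¹)ᵀ = (shiftedLap L)⁻¹ := by
    simpa [IsHermitian, conjTranspose_eq_transpose_of_trivial] using hL.posDef_shiftedLap.1.inv
  rw [lapPinv_eq]
  refine sub_pow_succ_of_absorbing ?_ ?_ (isIdempotentElem_inv_card_smul_Jmat hn) m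
  · rw [Matrix.mul_smul, Jmat_eq_vecMulVec, mul_vecMulVec, hL.inv_shiftedLap_mulVec_one hn]
  · rw [Matrix.smul_mul, Jmat_eq_vecMulVec, vecMulVec_mul, ← mulVec_transpose, hsymm,
      hL.inv_shiftedLap_mulVec_one hn]

theorem reff_succ (hL : IsConnLaplacian L) (m : ℕ) (i j : Fin n) :
    reff L (m + 1) i j = edgeVec i j ⬝ᵥ ((shiftedLap L)⁻¹ ^ (m + 1)) *ᵥ edgeVec i j := by
  rw [reff, hL.lapPinv_pow_succ (Fin.pos i).ne' m,
    edgeVec_dotProduct_mulVec (hL.posDef_shiftedLap.1.inv.pow (m + 1))]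
  simp [Jmat]
  ring

end IsConnLaplacian

/-- Fundamental limit on the improvement of ζ₁(L) = tr(L^†) by adding one weighted edge:
the improvement never exceeds `r_e(L²)/r_e(L)`, regardless of the weight. -/
theorem zeta_one_improvement_fundamental_limit {n : ℕ}
    (L : Matrix (Fin n) (Fin n) ℝ) (hL : IsConnLaplacian L)
    (i j : Fin n) (hij : i ≠ j) (w : ℝ) (hw : 0 < w) :
    (lapPinv L).trace - (lapPinv (L + w • edgeLap i j)).trace ≤
      reff L 2 i j / reff L 1 i j := by
  set M := shiftedLap L
  set u := edgeVec i j
  have hM : M.PosDef := hL.posDef_shiftedLap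
  have hr₁ : 0 < u ⬝ᵥ M⁻¹ *ᵥ u := by
    simpa using hM.inv.dotProduct_mulVec_pos (edgeVec_ne_zero hij)
  have hr₂ : 0 ≤ u ⬝ᵥ (M⁻¹ ^ 2) *ᵥ u := by
    simpa using (hM.inv.posSemidef.pow 2).dotProduct_mulVec_nonneg u
  rw [hL.reff_succ 1, hL.reff_succ 0, lapPinv_eq, lapPinv_eq, shiftedLap_add_smul_edgeLap,
    trace_sub, trace_sub, sub_sub_sub_cancel_right,
    trace_inv_sub_trace_inv_add_smul_vecMulVec hM.det_pos.ne'.isUnit u u w (by positivity),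
    pow_one]
  exact div_one_add_mul_le_div hw.le hr₁ hr₂
end

section
/- Let ρ be a real-valued function on n×n real symmetric matrices and let g be a map from n×n real symmetric matrices to n×n real symmetric matrices such that: (i) for every symmetric L and symmetric Y, the function t ↦ ρ(L + tY) is differentiable with derivative at t equal to tr(g(L + tY) Y); and (ii) g is monotonically increasing with respect to the positive semidefinite order, i.e., L₁ ⪯ L₂ implies g(L₁) ⪯ g(L₂). Then for all symmetric matrices L₁ ⪯ L₂ and every symmetric positive semidefinite matrix X, the increments satisfy ρ(L₁ + X) − ρ(L₁) ≤ ρ(L₂ + X) − ρ(L₂). -/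
/-!
The gap `t ↦ ρ (L₂ + t • X) - ρ (L₁ + t • X)` has derivative
`tr ((g (L₂ + t • X) - g (L₁ + t • X)) * X)`, the trace of a product of two positive
semidefinite matrices, hence is nonnegative; so the gap is monotone, and comparing `t = 0`
with `t = 1` gives the inequality.
-/

open Matrix

open scoped ComplexOrder MatrixOrder in
theorem Matrix.PosSemidef.trace_mul_nonneg {ι 𝕜 : Type*} [Fintype ι] [RCLike 𝕜]
    {A B : Matrix ι ι 𝕜} (hA : A.PosSemidef) (hB : B.PosSemidef) : 0 ≤ (A * B).trace := by
  classical
  obtain ⟨C, rfl⟩ := CStarAlgebra.nonneg_iff_eq_star_mul_self.mp hA.nonneg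
  calc 0 ≤ (C * B * Cᴴ).trace := (hB.mul_mul_conjTranspose_same C).trace_nonneg
    _ = (star C * C * B).trace := by
      rw [trace_mul_comm, ← Matrix.mul_assoc, star_eq_conjTranspose]

open scoped ComplexOrder in
theorem Matrix.trace_mul_le_trace_mul_of_posSemidef_sub {ι 𝕜 : Type*} [Fintype ι] [RCLike 𝕜]
    {A B X : Matrix ι ι 𝕜} (hAB : (B - A).PosSemidef) (hX : X.PosSemidef) :
    (A * X).trace ≤ (B * X).trace := by
  have := hAB.trace_mul_nonneg hX
  rwa [Matrix.sub_mul, trace_sub, sub_nonneg] at this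

theorem monotone_sub_of_hasDerivAt_le {u v u' v' : ℝ → ℝ} (hu : ∀ t, HasDerivAt u (u' t) t)
    (hv : ∀ t, HasDerivAt v (v' t) t) (hle : ∀ t, u' t ≤ v' t) :
    Monotone fun t => v t - u t :=
  monotone_of_hasDerivAt_nonneg (fun t => (hv t).sub (hu t)) fun t => sub_nonneg.mpr (hle t)

theorem increment_inequality_of_monotone_gradient_general {n : ℕ}
    (ρ : Matrix (Fin n) (Fin n) ℝ → ℝ)
    (g : Matrix (Fin n) (Fin n) ℝ → Matrix (Fin n) (Fin n) ℝ)
    (hderiv : ∀ L Y : Matrix (Fin n) (Fin n) ℝ, L.IsSymm → Y.IsSymm → ∀ t : ℝ,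
      HasDerivAt (fun s : ℝ => ρ (L + s • Y)) ((g (L + t • Y) * Y).trace) t)
    (hmono : ∀ L₁ L₂ : Matrix (Fin n) (Fin n) ℝ, L₁.IsSymm → L₂.IsSymm →
      (L₂ - L₁).PosSemidef → (g L₂ - g L₁).PosSemidef)
    (L₁ L₂ X : Matrix (Fin n) (Fin n) ℝ) (h₁ : L₁.IsSymm) (h₂ : L₂.IsSymm)
    (hle : (L₂ - L₁).PosSemidef) (hX : X.PosSemidef) :
    ρ (L₁ + X) - ρ L₁ ≤ ρ (L₂ + X) - ρ L₂ := by
  have hXsymm : X.IsSymm := hX.isHermitian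
  have hgrad_le (t : ℝ) : (g (L₁ + t • X) * X).trace ≤ (g (L₂ + t • X) * X).trace := by
    refine trace_mul_le_trace_mul_of_posSemidef_sub (hmono _ _ ?_ ?_ ?_) hX
    · exact h₁.add (hXsymm.smul t)
    · exact h₂.add (hXsymm.smul t)
    · rwa [add_sub_add_right_eq_sub]
  have hgap := monotone_sub_of_hasDerivAt_le (hderiv L₁ X h₁ hXsymm) (hderiv L₂ X h₂ hXsymm)
    hgrad_le zero_le_one
  simp only [zero_smul, one_smul, add_zero] at hgap
  linarith

/-- If the gradient map `g` of `ρ` is monotone with respect to the Loewner order, then `ρ`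
has antitone increments: `ρ(L₁+X) − ρ(L₁) ≤ ρ(L₂+X) − ρ(L₂)` whenever `L₁ ⪯ L₂` and
`X ⪰ 0` (the key step for supermodularity). -/
theorem increment_inequality_of_monotone_gradient {n : ℕ}
    (ρ : Matrix (Fin n) (Fin n) ℝ → ℝ)
    (g : Matrix (Fin n) (Fin n) ℝ → Matrix (Fin n) (Fin n) ℝ)
    (hgsymm : ∀ L : Matrix (Fin n) (Fin n) ℝ, L.IsSymm → (g L).IsSymm)
    (hderiv : ∀ L Y : Matrix (Fin n) (Fin n) ℝ, L.IsSymm → Y.IsSymm → ∀ t : ℝ,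
      HasDerivAt (fun s : ℝ => ρ (L + s • Y)) ((g (L + t • Y) * Y).trace) t)
    (hmono : ∀ L₁ L₂ : Matrix (Fin n) (Fin n) ℝ, L₁.IsSymm → L₂.IsSymm →
      (L₂ - L₁).PosSemidef → (g L₂ - g L₁).PosSemidef)
    (L₁ L₂ X : Matrix (Fin n) (Fin n) ℝ) (h₁ : L₁.IsSymm) (h₂ : L₂.IsSymm)
    (hle : (L₂ - L₁).PosSemidef) (hX : X.PosSemidef) :
    ρ (L₁ + X) - ρ L₁ ≤ ρ (L₂ + X) - ρ L₂ :=
  increment_inequality_of_monotone_gradient_general ρ g hderiv hmono L₁ L₂ X h₁ h₂ hle hX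
end

section
/- Let κ > 1 and n ≥ 2. Then the normalized spectral function ρ(L) = (Σ_{i=2}^{n} λ_i(L)^{−κ})^{1/κ} is convex on the set of Laplacians of connected weighted graphs on n nodes: for any two such Laplacians L₁, L₂ and 0 ≤ α ≤ 1, the matrix αL₁ + (1−α)L₂ (for 0 < α < 1) is again the Laplacian of a connected weighted graph and ρ(αL₁ + (1−α)L₂) ≤ α ρ(L₁) + (1−α) ρ(L₂). -/
open Filter Finset Matrix

/-!
For a positive operator `T` and `x = T y` in its range, `⟪y, x⟫ = max_w (2⟪w, x⟫ - ⟪w, T w⟫)`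
(expand `⟪y - w, T (y - w)⟫ ≥ 0`), so `⟪T⁺ x, x⟫`, with `T⁺` the pseudo-inverse, is convex in `T`
as long as `x` stays in the range. Let `c i` be a unit eigenvector of `M = α • L₁ + (1 - α) • L₂` with eigenvalue `ν i ≠ 0`.
It is orthogonal to the common kernel, and convexity gives
`(ν i)⁻¹ ≤ α ∑ⱼ ⟪c i, b₁ j⟫² (μ₁ j)⁻¹ + (1 - α) ∑ⱼ ⟪c i, b₂ j⟫² (μ₂ j)⁻¹`
for orthonormal eigenbases `bₖ` of `Lₖ` with eigenvalues `μₖ`. The matrices `(⟪c i, bₖ j⟫²)` are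
doubly stochastic, so by Jensen they do not increase the `ℓ^κ` norm, and Minkowski's inequality
finishes the proof. Since `0⁻¹ = 0` in Lean, `λ⁻¹` is the pseudo-inverse eigenvalue and sums may run
over all eigenvalues, the zero ones contributing nothing.
-/

open scoped RealInnerProductSpace

section LpNorm

variable {ι : Type*} [Fintype ι] {κ : ℝ}

lemma Real.Lp_const_mul_of_nonneg (hκ : 0 < κ) {c : ℝ} (hc : 0 ≤ c) {f : ι → ℝ} (hf : 0 ≤ f) :
    (∑ i, (c * f i) ^ κ) ^ (1 / κ) = c * (∑ i, f i ^ κ) ^ (1 / κ) := by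
  simp_rw [Real.mul_rpow hc (hf _), ← Finset.mul_sum]
  rw [Real.mul_rpow (Real.rpow_nonneg hc _) (sum_nonneg fun i _ => Real.rpow_nonneg (hf i) _),
    ← Real.rpow_mul hc, mul_one_div_cancel hκ.ne', Real.rpow_one]

lemma Real.Lp_mul_add_mul_le_of_nonneg (hκ : 1 ≤ κ) {a b : ℝ} (ha : 0 ≤ a) (hb : 0 ≤ b)
    {f g : ι → ℝ} (hf : 0 ≤ f) (hg : 0 ≤ g) :
    (∑ i, (a * f i + b * g i) ^ κ) ^ (1 / κ) ≤
      a * (∑ i, f i ^ κ) ^ (1 / κ) + b * (∑ i, g i ^ κ) ^ (1 / κ) := by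
  have hκ0 : 0 < κ := by linarith
  rw [← Real.Lp_const_mul_of_nonneg hκ0 ha hf, ← Real.Lp_const_mul_of_nonneg hκ0 hb hg]
  exact Real.Lp_add_le_of_nonneg _ hκ (fun i _ => mul_nonneg ha (hf i))
    (fun i _ => mul_nonneg hb (hg i))

lemma sum_rpow_mulVec_le_of_mem_doublyStochastic [DecidableEq ι] {P : Matrix ι ι ℝ}
    (hP : P ∈ doublyStochastic ℝ ι) {a : ι → ℝ} (ha : 0 ≤ a) (hκ : 1 ≤ κ) :
    ∑ i, (P *ᵥ a) i ^ κ ≤ ∑ i, a i ^ κ :=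
  calc ∑ i, (P *ᵥ a) i ^ κ ≤ ∑ i, (P *ᵥ fun j => a j ^ κ) i :=
        sum_le_sum fun i _ => Real.rpow_arith_mean_le_arith_mean_rpow _ _ _
          (fun _ _ => nonneg_of_mem_doublyStochastic hP) (sum_row_of_mem_doublyStochastic hP i)
          (fun j _ => ha j) hκ
    _ = ∑ i, a i ^ κ := sum_mulVec_of_mem_doublyStochastic hP

end LpNorm

section InnerProductSpace

variable {E : Type*} [NormedAddCommGroup E] [InnerProductSpace ℝ E]
  {ι : Type*} [Fintype ι]

namespace OrthonormalBasis

lemma exists_apply_eq_of_eigenbasis (b : OrthonormalBasis ι ℝ E) {T : E →ₗ[ℝ] E} {μ : ι → ℝ}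
    (hb : ∀ j, T (b j) = μ j • b j) {x : E} (hx : ∀ j, μ j = 0 → ⟪b j, x⟫ = 0) :
    ∃ y, T y = x ∧ ⟪y, x⟫ = ∑ j, ⟪x, b j⟫ ^ 2 * (μ j)⁻¹ := by
  refine ⟨∑ j, ((μ j)⁻¹ * ⟪b j, x⟫) • b j, ?_, ?_⟩
  · conv_rhs => rw [← b.sum_repr' x]
    simp only [map_sum, map_smul, hb, smul_smul]
    refine sum_congr rfl fun j _ => ?_
    rcases eq_or_ne (μ j) 0 with hμ | hμ
    · simp [hx j hμ]
    · rw [mul_right_comm, inv_mul_cancel₀ hμ, one_mul]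
  · simp only [sum_inner, real_inner_smul_left]
    exact sum_congr rfl fun j _ => by rw [real_inner_comm x]; ring

lemma inner_sq_mem_doublyStochastic [DecidableEq ι] (b c : OrthonormalBasis ι ℝ E) :
    of (fun i j => ⟪b i, c j⟫ ^ 2) ∈ doublyStochastic ℝ ι := by
  refine mem_doublyStochastic_iff_sum.mpr ⟨fun i j => sq_nonneg _, fun i => ?_, fun j => ?_⟩
  · simp [c.sum_sq_inner_left]
  · simp [b.sum_sq_inner_right]

end OrthonormalBasis

namespace LinearMap

lemma IsPositive.two_mul_inner_sub_inner_le {T : E →ₗ[ℝ] E} (hT : T.IsPositive) {x y : E}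
    (hy : T y = x) (w : E) : 2 * ⟪w, x⟫ - ⟪w, T w⟫ ≤ ⟪y, x⟫ := by
  have h := hT.inner_nonneg_right (y - w)
  have hsymm := hT.isSymmetric y w
  rw [hy, real_inner_comm] at hsymm
  simp only [map_sub, inner_sub_left, inner_sub_right, hy] at h
  linarith

lemma IsPositive.inner_le_of_convexComb_apply_eq {T₁ T₂ : E →ₗ[ℝ] E} (h₁ : T₁.IsPositive)
    (h₂ : T₂.IsPositive) {α : ℝ} (hα0 : 0 ≤ α) (hα1 : α ≤ 1) {x y y₁ y₂ : E}
    (hy : (α • T₁ + (1 - α) • T₂) y = x) (hy₁ : T₁ y₁ = x) (hy₂ : T₂ y₂ = x) :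
    ⟪y, x⟫ ≤ α * ⟪y₁, x⟫ + (1 - α) * ⟪y₂, x⟫ := by
  have hq : ⟪y, x⟫ = α * ⟪y, T₁ y⟫ + (1 - α) * ⟪y, T₂ y⟫ := by
    rw [← hy, add_apply, smul_apply, smul_apply, inner_add_right, real_inner_smul_right,
      real_inner_smul_right]
  have hsplit : ⟪y, x⟫ =
      α * (2 * ⟪y, x⟫ - ⟪y, T₁ y⟫) + (1 - α) * (2 * ⟪y, x⟫ - ⟪y, T₂ y⟫) := by
    linear_combination -hq
  rw [hsplit]
  exact add_le_add (mul_le_mul_of_nonneg_left (h₁.two_mul_inner_sub_inner_le hy₁ y) hα0)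
    (mul_le_mul_of_nonneg_left (h₂.two_mul_inner_sub_inner_le hy₂ y) (by linarith))

lemma IsSymmetric.inner_eq_zero_of_apply_eq_zero {T : E →ₗ[ℝ] E} (hT : T.IsSymmetric)
    {ν : ℝ} (hν : ν ≠ 0) {x z : E} (hx : T x = ν • x) (hz : T z = 0) : ⟪z, x⟫ = 0 := by
  have h : ν * ⟪z, x⟫ = 0 := by
    rw [← real_inner_smul_right, ← hx, ← hT, hz, inner_zero_left]
  exact (mul_eq_zero.mp h).resolve_left hν

lemma IsSymmetric.exists_apply_eq_of_ker_le {T M : E →ₗ[ℝ] E} (hM : M.IsSymmetric)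
    (hTM : ker T ≤ ker M) {b : OrthonormalBasis ι ℝ E} {μ : ι → ℝ}
    (hb : ∀ j, T (b j) = μ j • b j) {ν : ℝ} (hν : ν ≠ 0) {x : E} (hx : M x = ν • x) :
    ∃ y, T y = x ∧ ⟪y, x⟫ = ∑ j, ⟪x, b j⟫ ^ 2 * (μ j)⁻¹ :=
  b.exists_apply_eq_of_eigenbasis hb fun j hμ =>
    hM.inner_eq_zero_of_apply_eq_zero hν hx (hTM (by rw [mem_ker, hb, hμ, zero_smul]))

lemma IsPositive.nonneg_of_apply_eq_smul {T : E →ₗ[ℝ] E} (hT : T.IsPositive) {μ : ℝ} {b : E}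
    (hb : ‖b‖ = 1) (h : T b = μ • b) : 0 ≤ μ := by
  have := hT.inner_nonneg_right b
  rwa [h, real_inner_smul_right, real_inner_self_eq_norm_sq, hb, one_pow, mul_one] at this

variable {T₁ T₂ : E →ₗ[ℝ] E} {α : ℝ} {b₁ b₂ : OrthonormalBasis ι ℝ E} {μ₁ μ₂ : ι → ℝ}

lemma IsPositive.inv_le_convexComb_of_apply_eq_smul (h₁ : T₁.IsPositive) (h₂ : T₂.IsPositive)
    (hker : ker T₁ = ker T₂) (hα0 : 0 ≤ α) (hα1 : α ≤ 1)
    (hb₁ : ∀ j, T₁ (b₁ j) = μ₁ j • b₁ j) (hb₂ : ∀ j, T₂ (b₂ j) = μ₂ j • b₂ j)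
    {ν : ℝ} (hν : ν ≠ 0) {x : E} (hx1 : ‖x‖ = 1) (hx : (α • T₁ + (1 - α) • T₂) x = ν • x) :
    ν⁻¹ ≤ α * ∑ j, ⟪x, b₁ j⟫ ^ 2 * (μ₁ j)⁻¹ + (1 - α) * ∑ j, ⟪x, b₂ j⟫ ^ 2 * (μ₂ j)⁻¹ := by
  have hM : (α • T₁ + (1 - α) • T₂).IsSymmetric :=
    ((h₁.smul_of_nonneg hα0).add (h₂.smul_of_nonneg (by linarith))).isSymmetric
  have hker_le : ker T₁ ≤ ker (α • T₁ + (1 - α) • T₂) := fun z hz => by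
    have hz₂ : z ∈ ker T₂ := hker ▸ hz
    rw [mem_ker] at hz hz₂ ⊢
    simp [hz, hz₂]
  obtain ⟨y₁, hy₁, hy₁x⟩ := hM.exists_apply_eq_of_ker_le hker_le hb₁ hν hx
  obtain ⟨y₂, hy₂, hy₂x⟩ := hM.exists_apply_eq_of_ker_le (hker ▸ hker_le) hb₂ hν hx
  have hy : (α • T₁ + (1 - α) • T₂) (ν⁻¹ • x) = x := by
    rw [map_smul, hx, smul_smul, inv_mul_cancel₀ hν, one_smul]
  have key := h₁.inner_le_of_convexComb_apply_eq h₂ hα0 hα1 hy hy₁ hy₂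
  rwa [real_inner_smul_left, real_inner_self_eq_norm_sq, hx1, one_pow, mul_one, hy₁x, hy₂x]
    at key

theorem IsPositive.Lp_inv_eigenvalues_convexComb_le [DecidableEq ι] (h₁ : T₁.IsPositive)
    (h₂ : T₂.IsPositive) (hker : ker T₁ = ker T₂) (hα0 : 0 ≤ α) (hα1 : α ≤ 1)
    (hb₁ : ∀ j, T₁ (b₁ j) = μ₁ j • b₁ j) (hb₂ : ∀ j, T₂ (b₂ j) = μ₂ j • b₂ j)
    {c : OrthonormalBasis ι ℝ E} {ν : ι → ℝ} (hc : ∀ i, (α • T₁ + (1 - α) • T₂) (c i) = ν i • c i)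
    {κ : ℝ} (hκ : 1 ≤ κ) :
    (∑ i, (ν i)⁻¹ ^ κ) ^ (1 / κ) ≤
      α * (∑ j, (μ₁ j)⁻¹ ^ κ) ^ (1 / κ) + (1 - α) * (∑ j, (μ₂ j)⁻¹ ^ κ) ^ (1 / κ) := by
  set P₁ := of fun i j => ⟪c i, b₁ j⟫ ^ 2
  set P₂ := of fun i j => ⟪c i, b₂ j⟫ ^ 2
  have hκ0 : 0 < κ := by linarith
  have hP₁ := c.inner_sq_mem_doublyStochastic b₁
  have hP₂ := c.inner_sq_mem_doublyStochastic b₂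
  have hμ₁ : 0 ≤ μ₁⁻¹ := fun j =>
    inv_nonneg.mpr (h₁.nonneg_of_apply_eq_smul (b₁.norm_eq_one j) (hb₁ j))
  have hμ₂ : 0 ≤ μ₂⁻¹ := fun j =>
    inv_nonneg.mpr (h₂.nonneg_of_apply_eq_smul (b₂.norm_eq_one j) (hb₂ j))
  have hν : 0 ≤ ν⁻¹ := fun i => inv_nonneg.mpr <|
    ((h₁.smul_of_nonneg hα0).add (h₂.smul_of_nonneg (by linarith))).nonneg_of_apply_eq_smul
      (c.norm_eq_one i) (hc i)
  have hPμ₁ : 0 ≤ P₁ *ᵥ μ₁⁻¹ := fun i =>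
    sum_nonneg fun j _ => mul_nonneg (nonneg_of_mem_doublyStochastic hP₁) (hμ₁ j)
  have hPμ₂ : 0 ≤ P₂ *ᵥ μ₂⁻¹ := fun i =>
    sum_nonneg fun j _ => mul_nonneg (nonneg_of_mem_doublyStochastic hP₂) (hμ₂ j)
  have hbound (i : ι) : (ν i)⁻¹ ≤ α * (P₁ *ᵥ μ₁⁻¹) i + (1 - α) * (P₂ *ᵥ μ₂⁻¹) i := by
    rcases eq_or_ne (ν i) 0 with hνi | hνi
    · rw [hνi, _root_.inv_zero]
      exact add_nonneg (mul_nonneg hα0 (hPμ₁ i)) (mul_nonneg (by linarith) (hPμ₂ i))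
    · exact h₁.inv_le_convexComb_of_apply_eq_smul h₂ hker hα0 hα1 hb₁ hb₂ hνi
        (c.norm_eq_one i) (hc i)
  calc (∑ i, (ν i)⁻¹ ^ κ) ^ (1 / κ)
      ≤ (∑ i, (α * (P₁ *ᵥ μ₁⁻¹) i + (1 - α) * (P₂ *ᵥ μ₂⁻¹) i) ^ κ) ^ (1 / κ) :=
        Real.rpow_le_rpow (sum_nonneg fun i _ => Real.rpow_nonneg (hν i) _)
          (sum_le_sum fun i _ => Real.rpow_le_rpow (hν i) (hbound i) hκ0.le) (by positivity)
    _ ≤ α * (∑ i, (P₁ *ᵥ μ₁⁻¹) i ^ κ) ^ (1 / κ) +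
          (1 - α) * (∑ i, (P₂ *ᵥ μ₂⁻¹) i ^ κ) ^ (1 / κ) :=
        Real.Lp_mul_add_mul_le_of_nonneg hκ hα0 (by linarith) hPμ₁ hPμ₂
    _ ≤ α * (∑ j, (μ₁ j)⁻¹ ^ κ) ^ (1 / κ) + (1 - α) * (∑ j, (μ₂ j)⁻¹ ^ κ) ^ (1 / κ) := by
        gcongr α * ?_ + (1 - α) * ?_
        · exact Real.rpow_le_rpow (sum_nonneg fun i _ => Real.rpow_nonneg (hPμ₁ i) _)
            (sum_rpow_mulVec_le_of_mem_doublyStochastic hP₁ hμ₁ hκ) (by positivity)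
        · exact Real.rpow_le_rpow (sum_nonneg fun i _ => Real.rpow_nonneg (hPμ₂ i) _)
            (sum_rpow_mulVec_le_of_mem_doublyStochastic hP₂ hμ₂ hκ) (by positivity)

end LinearMap

end InnerProductSpace

lemma Matrix.IsHermitian.toEuclideanLin_eigenvectorBasis {ι : Type*} [Fintype ι] [DecidableEq ι]
    {A : Matrix ι ι ℝ} (hA : A.IsHermitian) (j : ι) :
    toEuclideanLin A (hA.eigenvectorBasis j) = hA.eigenvalues j • hA.eigenvectorBasis j :=
  WithLp.ofLp_injective 2 (hA.mulVec_eigenvectorBasis j)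

section Laplacian

variable {n : ℕ} {L L₁ L₂ : Matrix (Fin n) (Fin n) ℝ}

lemma Matrix.PosSemidef.sortedEigenvalues_eq_zero (hL : L.PosSemidef) (hdet : L.det = 0)
    {i : Fin n} (hi : (i : ℕ) = 0) : sortedEigenvalues L i = 0 := by
  obtain ⟨j, -, hj⟩ : ∃ j ∈ univ, hL.1.eigenvalues j = 0 := by
    simpa [hL.1.det_eq_prod_eigenvalues, prod_eq_zero_iff] using hdet
  set σ := Tuple.sort hL.1.eigenvalues
  have hle : hL.1.eigenvalues (σ i) ≤ hL.1.eigenvalues (σ (σ.symm j)) :=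
    Tuple.monotone_sort hL.1.eigenvalues (Fin.le_iff_val_le_val.2 (hi ▸ Nat.zero_le _))
  rw [Equiv.apply_symm_apply, hj] at hle
  rw [sortedEigenvalues, dif_pos hL.1]
  exact le_antisymm hle (hL.eigenvalues_nonneg _)

-- The excluded bottom eigenvalue is `0`, and `Real.rpow` has `0 ^ (-κ) = 0`.
lemma Matrix.PosSemidef.sum_sortedEigenvalues_rpow_neg (hL : L.PosSemidef)
    (hL1 : L *ᵥ (fun _ => (1 : ℝ)) = 0) {κ : ℝ} (hκ : κ ≠ 0) :
    ∑ i ∈ univ.filter (fun i : Fin n => 1 ≤ (i : ℕ)), sortedEigenvalues L i ^ (-κ) =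
      ∑ i, (hL.1.eigenvalues i)⁻¹ ^ κ := by
  have hbottom (i : Fin n) (hi : ¬ 1 ≤ (i : ℕ)) : sortedEigenvalues L i = 0 :=
    hL.sortedEigenvalues_eq_zero (exists_mulVec_eq_zero_iff.1
      ⟨fun _ => 1, fun h1 => one_ne_zero (congrFun h1 i), hL1⟩) (by omega)
  rw [sum_filter_of_ne fun i _ hi => by_contra fun h => hi <| by
    rw [hbottom i h, Real.zero_rpow (neg_ne_zero.2 hκ)]]
  rw [sortedEigenvalues, dif_pos hL.1]
  simp only [Function.comp_apply]
  rw [Equiv.sum_comp (Tuple.sort hL.1.eigenvalues) (fun i => hL.1.eigenvalues i ^ (-κ))]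
  exact sum_congr rfl fun i _ => by
    rw [Real.rpow_neg (hL.eigenvalues_nonneg i), Real.inv_rpow (hL.eigenvalues_nonneg i)]

namespace IsConnLaplacian

lemma mulVec_eq_zero_iff (hL : IsConnLaplacian L) {v : Fin n → ℝ} :
    L *ᵥ v = 0 ↔ ∃ c : ℝ, v = fun _ => c := by
  refine ⟨hL.2.2 v, ?_⟩
  rintro ⟨c, rfl⟩
  have hc : (fun _ : Fin n => c) = c • fun _ => (1 : ℝ) := by ext; simp
  rw [hc, mulVec_smul, hL.2.1, smul_zero]

lemma ker_toEuclideanLin_eq (h₁ : IsConnLaplacian L₁) (h₂ : IsConnLaplacian L₂) :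
    LinearMap.ker (toEuclideanLin L₁) = LinearMap.ker (toEuclideanLin L₂) := by
  ext v
  rw [LinearMap.mem_ker, LinearMap.mem_ker, ← WithLp.ofLp_eq_zero, ← WithLp.ofLp_eq_zero,
    ofLp_toLpLin, ofLp_toLpLin, toLin'_apply, toLin'_apply, h₁.mulVec_eq_zero_iff,
    h₂.mulVec_eq_zero_iff]

variable {α : ℝ}

lemma posSemidef_convexComb (h₁ : IsConnLaplacian L₁) (h₂ : IsConnLaplacian L₂) (hα0 : 0 ≤ α)
    (hα1 : α ≤ 1) : (α • L₁ + (1 - α) • L₂).PosSemidef :=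
  (h₁.1.smul hα0).add (h₂.1.smul (sub_nonneg.2 hα1))

lemma convexComb_mulVec_one (h₁ : IsConnLaplacian L₁) (h₂ : IsConnLaplacian L₂) :
    (α • L₁ + (1 - α) • L₂) *ᵥ (fun _ => (1 : ℝ)) = 0 := by
  rw [add_mulVec, smul_mulVec, smul_mulVec, h₁.2.1, h₂.2.1, smul_zero, smul_zero, add_zero]

lemma convexComb (h₁ : IsConnLaplacian L₁) (h₂ : IsConnLaplacian L₂) (hα0 : 0 < α)
    (hα1 : α < 1) : IsConnLaplacian (α • L₁ + (1 - α) • L₂) := by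
  refine ⟨h₁.posSemidef_convexComb h₂ hα0.le hα1.le, h₁.convexComb_mulVec_one h₂,
    fun v hv => h₁.2.2 v ?_⟩
  have hq : α * (v ⬝ᵥ L₁ *ᵥ v) + (1 - α) * (v ⬝ᵥ L₂ *ᵥ v) = 0 := by
    simpa [add_mulVec, smul_mulVec, dotProduct_add] using congrArg (v ⬝ᵥ ·) hv
  have hq₁ : 0 ≤ v ⬝ᵥ L₁ *ᵥ v := by simpa using h₁.1.dotProduct_mulVec_nonneg v
  have hq₂ : 0 ≤ v ⬝ᵥ L₂ *ᵥ v := by simpa using h₂.1.dotProduct_mulVec_nonneg v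
  have hv₁ : v ⬝ᵥ L₁ *ᵥ v = 0 := by nlinarith
  simpa [hv₁] using h₁.1.dotProduct_mulVec_zero_iff v

end IsConnLaplacian

end Laplacian

theorem normalized_zeta_convexOn_laplacians_general {n : ℕ}
    (κ : ℝ) (hκ : 1 < κ)
    (L₁ L₂ : Matrix (Fin n) (Fin n) ℝ)
    (h₁ : IsConnLaplacian L₁) (h₂ : IsConnLaplacian L₂)
    (α : ℝ) (hα0 : 0 ≤ α) (hα1 : α ≤ 1) :
    (0 < α → α < 1 → IsConnLaplacian (α • L₁ + (1 - α) • L₂)) ∧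
      (∑ i ∈ Finset.univ.filter (fun i : Fin n => 1 ≤ (i : ℕ)),
          (sortedEigenvalues (α • L₁ + (1 - α) • L₂) i) ^ (-κ)) ^ (1 / κ) ≤
        α * (∑ i ∈ Finset.univ.filter (fun i : Fin n => 1 ≤ (i : ℕ)),
            (sortedEigenvalues L₁ i) ^ (-κ)) ^ (1 / κ) +
          (1 - α) * (∑ i ∈ Finset.univ.filter (fun i : Fin n => 1 ≤ (i : ℕ)),
            (sortedEigenvalues L₂ i) ^ (-κ)) ^ (1 / κ) := by
  refine ⟨fun hα0' hα1' => h₁.convexComb h₂ hα0' hα1', ?_⟩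
  have hM := h₁.posSemidef_convexComb h₂ hα0 hα1
  have hκ0 : κ ≠ 0 := by positivity
  rw [hM.sum_sortedEigenvalues_rpow_neg (h₁.convexComb_mulVec_one h₂) hκ0,
    h₁.1.sum_sortedEigenvalues_rpow_neg h₁.2.1 hκ0, h₂.1.sum_sortedEigenvalues_rpow_neg h₂.2.1 hκ0]
  have hc (i : Fin n) : (α • toEuclideanLin L₁ + (1 - α) • toEuclideanLin L₂)
      (hM.1.eigenvectorBasis i) = hM.1.eigenvalues i • hM.1.eigenvectorBasis i := by
    rw [← map_smul, ← map_smul, ← map_add]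
    exact hM.1.toEuclideanLin_eigenvectorBasis i
  exact (isPositive_toEuclideanLin_iff.2 h₁.1).Lp_inv_eigenvalues_convexComb_le
    (isPositive_toEuclideanLin_iff.2 h₂.1) (h₁.ker_toEuclideanLin_eq h₂) hα0 hα1
    h₁.1.1.toEuclideanLin_eigenvectorBasis h₂.1.1.toEuclideanLin_eigenvectorBasis hc hκ.le

/-- Convexity of the normalized spectral function ρ(L) = (Σ_{i=2}^n λ_i^{−κ})^{1/κ} on
connected-graph Laplacians, for κ > 1. -/
theorem normalized_zeta_convexOn_laplacians {n : ℕ} (hn : 2 ≤ n)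
    (κ : ℝ) (hκ : 1 < κ)
    (L₁ L₂ : Matrix (Fin n) (Fin n) ℝ)
    (h₁ : IsConnLaplacian L₁) (h₂ : IsConnLaplacian L₂)
    (α : ℝ) (hα0 : 0 ≤ α) (hα1 : α ≤ 1) :
    (0 < α → α < 1 → IsConnLaplacian (α • L₁ + (1 - α) • L₂)) ∧
      (∑ i ∈ Finset.univ.filter (fun i : Fin n => 1 ≤ (i : ℕ)),
          (sortedEigenvalues (α • L₁ + (1 - α) • L₂) i) ^ (-κ)) ^ (1 / κ) ≤
        α * (∑ i ∈ Finset.univ.filter (fun i : Fin n => 1 ≤ (i : ℕ)),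
            (sortedEigenvalues L₁ i) ^ (-κ)) ^ (1 / κ) +
          (1 - α) * (∑ i ∈ Finset.univ.filter (fun i : Fin n => 1 ≤ (i : ℕ)),
            (sortedEigenvalues L₂ i) ^ (-κ)) ^ (1 / κ) :=
  normalized_zeta_convexOn_laplacians_general κ hκ L₁ L₂ h₁ h₂ α hα0 hα1
end

section
/- Let a and λ be real numbers with 0 < a ≤ λ. Then the improper integral over the real line satisfies ∫_{−∞}^{∞} log(1 − a²/(λ² + ω²)) dω = 2π (√(λ² − a²) − λ). -/
/-!
Put `b = √(lam² - a²)`, so that the integrand is `log ((b² + ω²) / (lam² + ω²))`, an even function.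
For `c ≥ 0`, `x log (c² + x²) - 2x + 2c arctan (x / c)` is an antiderivative of `log (c² + x²)`.
The difference of the antiderivatives for `c = b` and `c = lam` vanishes at `0`; at `+∞` its
logarithmic part `x log ((b² + x²) / (lam² + x²)) = O(1/x)` dies out and the arctangents leave
`π (b - lam)`. Doubling gives the integral over the line.
-/

open Filter MeasureTheory Real Set Topology

/-- For `c = 0` the junk value `x / 0 = 0` kills the arctangent term, leaving `x log x² - 2x`,
which is still an antiderivative of `log x²` away from `0`. -/
noncomputable def antiderivLogSqAdd (c x : ℝ) : ℝ :=
  x * log (c ^ 2 + x ^ 2) - 2 * x + 2 * c * arctan (x / c)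

theorem hasDerivAt_antiderivLogSqAdd {c x : ℝ} (h : c ^ 2 + x ^ 2 ≠ 0) :
    HasDerivAt (antiderivLogSqAdd c) (log (c ^ 2 + x ^ 2)) x := by
  have hlog : HasDerivAt (fun y => log (c ^ 2 + y ^ 2)) (2 * x / (c ^ 2 + x ^ 2)) x := by
    simpa using ((hasDerivAt_pow 2 x).const_add (c ^ 2)).log h
  have harctan : HasDerivAt (fun y => arctan (y / c)) (1 / (1 + (x / c) ^ 2) * (1 / c)) x :=
    ((hasDerivAt_id' x).div_const c).arctan
  refine ((((hasDerivAt_id' x).mul hlog).sub ((hasDerivAt_id' x).const_mul 2)).add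
    (harctan.const_mul (2 * c))).congr_deriv ?_
  rcases eq_or_ne c 0 with rfl | hc
  · have hx : x ≠ 0 := by simpa using h
    field_simp
    ring
  · field_simp
    ring

theorem continuous_antiderivLogSqAdd (c : ℝ) : Continuous (antiderivLogSqAdd c) := by
  have hmul_log : Continuous fun x => x * log (c ^ 2 + x ^ 2) := by
    rcases eq_or_ne c 0 with rfl | hc
    · have h : (fun x : ℝ => x * log (0 ^ 2 + x ^ 2)) = fun x => 2 * (x * log x) := by
        ext x
        rw [zero_pow two_ne_zero, zero_add, log_pow]
        push_cast
        ring
      exact h ▸ continuous_const.mul continuous_mul_log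
    · exact continuous_id.mul <| (continuous_const.add (continuous_pow 2)).log
        fun x => (add_pos_of_pos_of_nonneg (sq_pos_of_ne_zero hc) (sq_nonneg x)).ne'
  unfold antiderivLogSqAdd
  fun_prop

theorem tendsto_mul_arctan_div_atTop {c : ℝ} (hc : 0 ≤ c) :
    Tendsto (fun x => c * arctan (x / c)) atTop (𝓝 (c * (π / 2))) := by
  rcases hc.eq_or_lt with rfl | hc
  · simp
  · exact ((tendsto_arctan_atTop.mono_right nhdsWithin_le_nhds).comp
      (tendsto_id.atTop_div_const hc)).const_mul c

theorem log_add_sq_div_add_sq_nonpos {p q : ℝ} (hp : 0 ≤ p) (hpq : p ≤ q) (x : ℝ) :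
    log ((p + x ^ 2) / (q + x ^ 2)) ≤ 0 := by
  have hpx : 0 ≤ p + x ^ 2 := by nlinarith
  exact log_nonpos (div_nonneg hpx (by linarith)) (div_le_one_of_le₀ (by linarith) (by linarith))

theorem tendsto_mul_log_add_sq_div_add_sq_atTop {p q : ℝ} (hp : 0 ≤ p) (hpq : p ≤ q) :
    Tendsto (fun x => x * log ((p + x ^ 2) / (q + x ^ 2))) atTop (𝓝 0) := by
  have hlower : ∀ x > 0, -(q - p) / x ≤ x * log ((p + x ^ 2) / (q + x ^ 2)) := by
    intro x hx
    have hpx : 0 < p + x ^ 2 := add_pos_of_nonneg_of_pos hp (by positivity)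
    calc -(q - p) / x ≤ -(q - p) * x / (p + x ^ 2) := by
          rw [div_le_div_iff₀ hx hpx]
          nlinarith [mul_nonneg (sub_nonneg.2 hpq) hp]
      _ = x * (1 - ((p + x ^ 2) / (q + x ^ 2))⁻¹) := by
          field_simp
          ring
      _ ≤ _ := mul_le_mul_of_nonneg_left
          (one_sub_inv_le_log_of_pos (div_pos hpx (by linarith))) hx.le
  exact tendsto_of_tendsto_of_tendsto_of_le_of_le' (tendsto_const_nhds.div_atTop tendsto_id)
    tendsto_const_nhds ((eventually_gt_atTop 0).mono hlower)
    ((eventually_ge_atTop 0).mono fun x hx =>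
      mul_nonpos_of_nonneg_of_nonpos hx (log_add_sq_div_add_sq_nonpos hp hpq x))

theorem tendsto_antiderivLogSqAdd_sub_atTop {b c : ℝ} (hb : 0 ≤ b) (hbc : b ≤ c) :
    Tendsto (fun x => antiderivLogSqAdd b x - antiderivLogSqAdd c x) atTop
      (𝓝 (π * (b - c))) := by
  have h := ((tendsto_mul_log_add_sq_div_add_sq_atTop (sq_nonneg b)
    (pow_le_pow_left₀ hb hbc 2)).add ((tendsto_mul_arctan_div_atTop hb).const_mul 2)).sub
    ((tendsto_mul_arctan_div_atTop (hb.trans hbc)).const_mul 2)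
  refine (h.congr' ?_).trans_eq (by congr 1; ring)
  filter_upwards [eventually_gt_atTop 0] with x hx
  rw [antiderivLogSqAdd, antiderivLogSqAdd, log_div (by positivity) (by positivity)]
  ring

theorem integral_Ioi_log_sq_add_div_sq_add {b c : ℝ} (hb : 0 ≤ b) (hc : 0 ≤ c) :
    ∫ x in Ioi 0, log ((b ^ 2 + x ^ 2) / (c ^ 2 + x ^ 2)) = π * (b - c) := by
  wlog hbc : b ≤ c generalizing b c
  · simp_rw [← inv_div (c ^ 2 + _), log_inv, integral_neg, this hc hb (le_of_not_ge hbc)]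
    ring
  have hderiv : ∀ x ∈ Ioi (0 : ℝ), HasDerivAt
      (fun x => antiderivLogSqAdd b x - antiderivLogSqAdd c x)
      (log ((b ^ 2 + x ^ 2) / (c ^ 2 + x ^ 2))) x := by
    intro x hx
    have hx : 0 < x := hx
    rw [log_div (by positivity) (by positivity)]
    exact (hasDerivAt_antiderivLogSqAdd (by positivity)).sub
      (hasDerivAt_antiderivLogSqAdd (by positivity))
  rw [integral_Ioi_of_hasDerivAt_of_nonpos
    ((continuous_antiderivLogSqAdd b).sub (continuous_antiderivLogSqAdd c)).continuousWithinAt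
    hderiv (fun x _ => log_add_sq_div_add_sq_nonpos (sq_nonneg b) (pow_le_pow_left₀ hb hbc 2) x)
    (tendsto_antiderivLogSqAdd_sub_atTop hb hbc)]
  simp [antiderivLogSqAdd]

theorem integral_log_sq_add_div_sq_add {b c : ℝ} (hb : 0 ≤ b) (hc : 0 ≤ c) :
    ∫ x, log ((b ^ 2 + x ^ 2) / (c ^ 2 + x ^ 2)) = 2 * π * (b - c) := by
  rw [mul_assoc, ← integral_Ioi_log_sq_add_div_sq_add hb hc, ← integral_comp_abs]
  simp only [sq_abs]

/-- The γ-entropy integral: for `0 < a ≤ lam`,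
`∫_ℝ log(1 − a²/(lam² + ω²)) dω = 2π (√(lam² − a²) − lam)`. -/
theorem integral_log_one_sub_sq_div {a lam : ℝ} (ha : 0 < a) (halam : a ≤ lam) :
    ∫ ω : ℝ, Real.log (1 - a ^ 2 / (lam ^ 2 + ω ^ 2)) =
      2 * Real.pi * (Real.sqrt (lam ^ 2 - a ^ 2) - lam) := by
  have hlam : 0 < lam := ha.trans_le halam
  have hsq : √(lam ^ 2 - a ^ 2) ^ 2 = lam ^ 2 - a ^ 2 := sq_sqrt (by nlinarith)
  have hintegrand : ∀ ω : ℝ, 1 - a ^ 2 / (lam ^ 2 + ω ^ 2) =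
      (√(lam ^ 2 - a ^ 2) ^ 2 + ω ^ 2) / (lam ^ 2 + ω ^ 2) := fun ω => by
    rw [hsq]
    field_simp
    ring
  simp_rw [hintegrand]
  exact integral_log_sq_add_div_sq_add (sqrt_nonneg _) hlam.le
end

section
/- For every real x > 0, one has lim_{γ → ∞} γ² ( x − √(x² − γ⁻²) ) = 1/(2x). Consequently, the γ-entropy of a linear consensus network, I_γ(L) = Σ_{i=2}^n γ²(λ_i − √(λ_i² − γ⁻²)), converges as γ → ∞ to (1/2) Σ_{i=2}^n λ_i⁻¹, the squared H₂-norm of the network. -/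
/-!
Rationalising, `γ²(x − √(x² − γ⁻²)) = 1 / (x + √(x² − γ⁻²))`, which tends to `1 / (2x)`.
For a connected Laplacian the kernel is spanned by `𝟙`, so by rank–nullity `0` is an eigenvalue
of multiplicity at most one; since the sorted eigenvalues are nonnegative and increasing,
`λ₂, …, λₙ` are positive and the scalar limit applies to each term of the γ-entropy.
-/

open Filter Finset Matrix

theorem sub_sqrt_sq_sub_eq_div {x t : ℝ} (hx : 0 < x) (ht : t ≤ x ^ 2) :
    x - √(x ^ 2 - t) = t / (x + √(x ^ 2 - t)) := by
  have hsq : √(x ^ 2 - t) ^ 2 = x ^ 2 - t := Real.sq_sqrt (sub_nonneg.2 ht)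
  have hpos : 0 < x + √(x ^ 2 - t) := by positivity
  rw [eq_div_iff hpos.ne']
  linear_combination -hsq

theorem tendsto_sq_mul_sub_sqrt_sq_sub_inv_sq {x : ℝ} (hx : 0 < x) :
    Tendsto (fun γ : ℝ => γ ^ 2 * (x - √(x ^ 2 - (γ ^ 2)⁻¹))) atTop (nhds (1 / (2 * x))) := by
  have hinv : Tendsto (fun γ : ℝ => (γ ^ 2)⁻¹) atTop (nhds 0) :=
    (tendsto_pow_atTop two_ne_zero).inv_tendsto_atTop
  have hsqrt : Tendsto (fun γ : ℝ => √(x ^ 2 - (γ ^ 2)⁻¹)) atTop (nhds x) := by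
    have := ((tendsto_const_nhds (x := x ^ 2)).sub hinv).sqrt
    rwa [sub_zero, Real.sqrt_sq hx.le] at this
  have hlim : Tendsto (fun γ : ℝ => 1 / (x + √(x ^ 2 - (γ ^ 2)⁻¹))) atTop (nhds (1 / (2 * x))) := by
    simpa [two_mul] using (tendsto_const_nhds.add hsqrt).inv₀ (by positivity : x + x ≠ 0)
  refine hlim.congr' ?_
  filter_upwards [hinv.eventually (gt_mem_nhds (by positivity : (0 : ℝ) < x ^ 2)),
    eventually_ne_atTop 0] with γ hγ hγ0
  rw [sub_sqrt_sq_sub_eq_div hx hγ.le, mul_div_assoc', mul_inv_cancel₀ (pow_ne_zero 2 hγ0)]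

namespace Matrix.IsHermitian

variable {𝕜 : Type*} [RCLike 𝕜] {ι : Type*} [Fintype ι] [DecidableEq ι] {A : Matrix ι ι 𝕜}

theorem card_eigenvalues_eq_zero (hA : A.IsHermitian) :
    Fintype.card {i // hA.eigenvalues i = 0} = Module.finrank 𝕜 (LinearMap.ker A.mulVecLin) := by
  have := LinearMap.finrank_range_add_finrank_ker A.mulVecLin
  rw [← Matrix.rank, hA.rank_eq_card_non_zero_eigs, Fintype.card_subtype_compl,
    Module.finrank_fintype_fun_eq_card] at this
  have := Fintype.card_subtype_le (fun i => hA.eigenvalues i = 0)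
  omega

end Matrix.IsHermitian

theorem sortedEigenvalues_pos_of_finrank_ker_le_one {n : ℕ} {A : Matrix (Fin n) (Fin n) ℝ}
    (hA : A.PosSemidef) (hker : Module.finrank ℝ (LinearMap.ker A.mulVecLin) ≤ 1) {i : Fin n}
    (hi : 1 ≤ (i : ℕ)) : 0 < sortedEigenvalues A i := by
  rw [sortedEigenvalues, dif_pos hA.1]
  set σ := Tuple.sort hA.1.eigenvalues
  have : Subsingleton {j // hA.1.eigenvalues j = 0} :=
    Fintype.card_le_one_iff_subsingleton.1 (hA.1.card_eigenvalues_eq_zero ▸ hker)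
  let z : Fin n := ⟨0, i.pos⟩
  have hzi : z ≠ i := Fin.ne_of_val_ne (show 0 ≠ (i : ℕ) by omega)
  refine (hA.eigenvalues_nonneg _).lt_of_ne fun hi0 => hzi (σ.injective ?_)
  have hz0 : hA.1.eigenvalues (σ z) = 0 :=
    le_antisymm ((Tuple.monotone_sort hA.1.eigenvalues (Nat.zero_le i : z ≤ i)).trans hi0.ge)
      (hA.eigenvalues_nonneg _)
  exact congrArg Subtype.val
    (Subsingleton.elim (⟨σ z, hz0⟩ : {j // hA.1.eigenvalues j = 0}) ⟨σ i, hi0.symm⟩)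

theorem IsConnLaplacian.finrank_ker_le_one {n : ℕ} {L : Matrix (Fin n) (Fin n) ℝ}
    (hL : IsConnLaplacian L) : Module.finrank ℝ (LinearMap.ker L.mulVecLin) ≤ 1 := by
  have hle : LinearMap.ker L.mulVecLin ≤ ℝ ∙ fun _ => (1 : ℝ) := fun v hv => by
    obtain ⟨c, rfl⟩ := hL.2.2 v hv
    exact Submodule.mem_span_singleton.2 ⟨c, by ext; simp⟩
  calc _ ≤ Module.finrank ℝ (ℝ ∙ fun _ => (1 : ℝ)) := Submodule.finrank_mono hle
    _ ≤ 1 := by simpa using finrank_span_le_card ({fun _ => 1} : Set (Fin n → ℝ))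

theorem IsConnLaplacian.sortedEigenvalues_pos {n : ℕ} {L : Matrix (Fin n) (Fin n) ℝ}
    (hL : IsConnLaplacian L) {i : Fin n} (hi : 1 ≤ (i : ℕ)) : 0 < sortedEigenvalues L i :=
  sortedEigenvalues_pos_of_finrank_ker_le_one hL.1 hL.finrank_ker_le_one hi

/-- As γ → ∞, γ²(x − √(x² − γ⁻²)) → 1/(2x) for every x > 0; consequently the γ-entropy
of a consensus network converges to half the sum of inverse nonzero Laplacian eigenvalues
(the squared H₂-norm). -/
theorem gamma_entropy_tendsto_H2 {n : ℕ} :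
    (∀ x : ℝ, 0 < x →
      Tendsto (fun γ : ℝ => γ ^ 2 * (x - Real.sqrt (x ^ 2 - (γ ^ 2)⁻¹)))
        atTop (nhds (1 / (2 * x)))) ∧
    ∀ L : Matrix (Fin n) (Fin n) ℝ, IsConnLaplacian L →
      Tendsto (fun γ : ℝ =>
          ∑ i ∈ Finset.univ.filter (fun i : Fin n => 1 ≤ (i : ℕ)),
            γ ^ 2 * (sortedEigenvalues L i -
              Real.sqrt ((sortedEigenvalues L i) ^ 2 - (γ ^ 2)⁻¹)))
        atTop
        (nhds ((1 / 2) *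
          ∑ i ∈ Finset.univ.filter (fun i : Fin n => 1 ≤ (i : ℕ)),
            (sortedEigenvalues L i)⁻¹)) := by
  refine ⟨fun x hx => tendsto_sq_mul_sub_sqrt_sq_sub_inv_sq hx, fun L hL => ?_⟩
  rw [Finset.mul_sum]
  refine tendsto_finsetSum _ fun i hi => ?_
  convert tendsto_sq_mul_sub_sqrt_sq_sub_inv_sq
    (hL.sortedEigenvalues_pos (mem_filter.1 hi).2) using 2
  ring
end
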